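/- arXiv:math/0403255 — 5 statements merged into one kernel-verified Lean document; each statement's English description precedes it below -/
import Mathlib

section
/- Let μ_0, μ_1, ... be probability measures on a countable group G with finite entropy H(μ_n) < ∞ for all n. Then for every k ≥ 0 the limit h_k = lim_{n→∞} [H(μ_0*⋯*μ_n) − H(μ_k*⋯*μ_n)] exists and is nonnegative. -/
open scoped ENNReal
open Filter Topology

/-- Convolution of probability measures on a group: `(μ*ν)(g) = ∑_h μ(h) ν(h⁻¹ g)`. -/
noncomputable def pmfConv {G : Type*} [Group G] (μ ν : PMF G) : PMF G :=
  μ.bind fun h => ν.map fun k => h * k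

/-- Shannon entropy of a probability measure on a countable set, valued in `[0,∞]`. -/
noncomputable def pmfEntropy {G : Type*} (θ : PMF G) : ℝ≥0∞ :=
  ∑' g, ENNReal.ofReal (Real.negMulLog (θ g).toReal)

/-- `convPrefix μ n = μ 0 * μ 1 * ⋯ * μ (n-1)` (n factors). -/
noncomputable def convPrefix {G : Type*} [Group G] (μ : ℕ → PMF G) : ℕ → PMF G
  | 0 => PMF.pure 1
  | n + 1 => pmfConv (convPrefix μ n) (μ n)

/-- Left translate of a measure: `(g·μ)(A) = μ(g⁻¹ A)`. -/
noncomputable def lTrans {G : Type*} [Group G] (g : G) (μ : PMF G) : PMF G :=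
  μ.map fun x => g * x

/-- Total variation norm of the difference of two probability measures. -/
noncomputable def tvDist {G : Type*} (μ ν : PMF G) : ℝ :=
  ∑' x, |(μ x).toReal - (ν x).toReal|

section EntropyAux
attribute [local instance] Classical.propDecidable

variable {Ω Ω' A B C : Type*}

/-- `nl p = ofReal (negMulLog p.toReal)`. -/
noncomputable def nl (p : ℝ≥0∞) : ℝ≥0∞ := ENNReal.ofReal (Real.negMulLog p.toReal)

/-- `nlog p = ofReal (- log p.toReal)`. -/
noncomputable def nlog (p : ℝ≥0∞) : ℝ≥0∞ := ENNReal.ofReal (- Real.log p.toReal)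

lemma pmfEntropy_eq (θ : PMF Ω) : pmfEntropy θ = ∑' g, nl (θ g) := rfl

@[simp] lemma nl_zero : nl 0 = 0 := by simp [nl]
@[simp] lemma nl_one : nl 1 = 0 := by simp [nl]

lemma nl_eq (p : ℝ≥0∞) (hp : p ≠ ⊤) : nl p = p * nlog p := by
  rw [nl, nlog, Real.negMulLog, neg_mul, ← mul_neg,
    ENNReal.ofReal_mul ENNReal.toReal_nonneg, ENNReal.ofReal_toReal hp]

lemma nlog_anti {p q : ℝ≥0∞} (hp : p ≠ 0) (hq : q ≠ ⊤) (hpq : p ≤ q) : nlog q ≤ nlog p := by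
  have hp' : 0 < p.toReal := ENNReal.toReal_pos hp (ne_top_of_le_ne_top hq hpq)
  exact ENNReal.ofReal_le_ofReal (by
    have := Real.log_le_log hp' ((ENNReal.toReal_le_toReal (ne_top_of_le_ne_top hq hpq) hq).2 hpq)
    linarith)

lemma nl_tsum_le {ι : Type*} (f : ι → ℝ≥0∞) (h1 : (∑' i, f i) ≤ 1) :
    nl (∑' i, f i) ≤ ∑' i, nl (f i) := by
  set s := ∑' i, f i with hs
  have hstop : s ≠ ⊤ := ne_top_of_le_ne_top ENNReal.one_ne_top h1
  rw [nl_eq s hstop, ← ENNReal.tsum_mul_right]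
  refine ENNReal.tsum_le_tsum fun i => ?_
  rcases eq_or_ne (f i) 0 with h0 | h0
  · simp [h0]
  · have hle : f i ≤ s := ENNReal.le_tsum i
    rw [nl_eq (f i) (ne_top_of_le_ne_top hstop hle)]
    exact mul_le_mul_right (nlog_anti h0 hstop hle) _

lemma ent_map_le (θ : PMF Ω) (f : Ω → Ω') : pmfEntropy (θ.map f) ≤ pmfEntropy θ := by
  rw [pmfEntropy_eq, pmfEntropy_eq]
  calc ∑' y, nl (θ.map f y)
      ≤ ∑' y, ∑' x, nl (if y = f x then θ x else 0) := by
        refine ENNReal.tsum_le_tsum fun y => ?_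
        rw [PMF.map_apply]
        refine nl_tsum_le _ (le_trans (ENNReal.tsum_le_tsum fun x => ?_) θ.tsum_coe.le)
        split <;> simp
    _ = ∑' y, ∑' x, (if y = f x then nl (θ x) else 0) := by
        congr 1; ext y; congr 1; ext x; split <;> simp
    _ = ∑' x, ∑' y, (if y = f x then nl (θ x) else 0) := ENNReal.tsum_comm
    _ = ∑' x, nl (θ x) := by
        congr 1; ext x; exact tsum_ite_eq (f x) (fun _ => nl (θ x))

lemma map_apply_injective (θ : PMF Ω) {f : Ω → Ω'} (hf : Function.Injective f) (x : Ω) :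
    θ.map f (f x) = θ x := by
  rw [PMF.map_apply]
  rw [tsum_eq_single x (fun b hb => if_neg (fun h => hb (hf h.symm)))]
  simp

lemma ent_map_injective (θ : PMF Ω) {f : Ω → Ω'} (hf : Function.Injective f) :
    pmfEntropy (θ.map f) = pmfEntropy θ := by
  rw [pmfEntropy_eq, pmfEntropy_eq]
  rw [← hf.tsum_eq (f := fun y => nl (θ.map f y)) ?_]
  · exact tsum_congr fun x => by rw [map_apply_injective θ hf x]
  · intro y hy
    simp only [Function.mem_support, ne_eq] at hy
    have : θ.map f y ≠ 0 := fun h => hy (by simp [h])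
    have hmem : y ∈ (θ.map f).support := this
    rw [PMF.support_map] at hmem
    exact Set.image_subset_range f θ.support hmem


lemma map_equiv_apply (θ : PMF Ω) (e : Ω ≃ Ω') (y : Ω') : θ.map e y = θ (e.symm y) := by
  rw [PMF.map_apply]
  rw [tsum_eq_single (e.symm y) (fun b hb => if_neg (fun h => hb (by rw [h, Equiv.symm_apply_apply])))]
  simp

lemma margFst (θ : PMF (A × B)) (a : A) : θ.map Prod.fst a = ∑' b, θ (a, b) := by
  rw [PMF.map_apply, ENNReal.tsum_prod']
  rw [tsum_eq_single a (fun x hx => by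
    simp only [Ne.symm hx, if_false]
    exact tsum_zero)]
  simp

lemma margSnd (θ : PMF (A × B)) (b : B) : θ.map Prod.snd b = ∑' a, θ (a, b) := by
  rw [PMF.map_apply, ENNReal.tsum_prod']
  rw [ENNReal.tsum_comm (f := fun x y => if b = (x, y).2 then θ (x, y) else 0)]
  rw [tsum_eq_single b (fun y hy => by
    simp only [Ne.symm hy, if_false]
    exact tsum_zero)]
  simp

/-- Independent product of two PMFs. -/
noncomputable def pmfProd (μ : PMF A) (ν : PMF B) : PMF (A × B) :=
  μ.bind fun a => ν.map fun b => (a, b)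

lemma pmfProd_apply (μ : PMF A) (ν : PMF B) (a : A) (b : B) :
    pmfProd μ ν (a, b) = μ a * ν b := by
  rw [pmfProd, PMF.bind_apply]
  have h1 : ∀ x, (ν.map fun b => (x, b)) (a, b) = if a = x then ν b else 0 := by
    intro x
    rw [PMF.map_apply]
    refine (tsum_eq_single b fun y hy => ?_).trans ?_
    · simp only [Prod.mk.injEq]; rw [if_neg]; exact fun h => hy h.2.symm
    · by_cases h : a = x <;> simp [h, Prod.ext_iff]
  simp only [h1]
  refine (tsum_eq_single a fun x hx => by simp [Ne.symm hx]).trans (by simp)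

lemma nl_mul {p q : ℝ≥0∞} (hp : p ≤ 1) (hq : q ≤ 1) :
    nl (p * q) = q * nl p + p * nl q := by
  have hp' : p ≠ ⊤ := ne_top_of_le_ne_top ENNReal.one_ne_top hp
  have hq' : q ≠ ⊤ := ne_top_of_le_ne_top ENNReal.one_ne_top hq
  have h0 : ∀ r : ℝ≥0∞, r ≤ 1 → r ≠ ⊤ → 0 ≤ Real.negMulLog r.toReal := fun r h1 h2 =>
    Real.negMulLog_nonneg ENNReal.toReal_nonneg (by
      simpa using (ENNReal.toReal_le_toReal h2 ENNReal.one_ne_top).2 h1)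
  rw [nl, nl, nl, ENNReal.toReal_mul, Real.negMulLog_mul,
    ENNReal.ofReal_add (mul_nonneg ENNReal.toReal_nonneg (h0 p hp hp'))
      (mul_nonneg ENNReal.toReal_nonneg (h0 q hq hq')),
    ENNReal.ofReal_mul ENNReal.toReal_nonneg, ENNReal.ofReal_mul ENNReal.toReal_nonneg,
    ENNReal.ofReal_toReal hp', ENNReal.ofReal_toReal hq']

lemma ent_prod (μ : PMF A) (ν : PMF B) :
    pmfEntropy (pmfProd μ ν) = pmfEntropy μ + pmfEntropy ν := by
  rw [pmfEntropy_eq, ENNReal.tsum_prod']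
  calc ∑' a, ∑' b, nl (pmfProd μ ν (a, b))
      = ∑' a, ∑' b, (ν b * nl (μ a) + μ a * nl (ν b)) := by
        refine tsum_congr fun a => tsum_congr fun b => ?_
        rw [pmfProd_apply, nl_mul (μ.coe_le_one a) (ν.coe_le_one b)]
    _ = ∑' a, ((∑' b, ν b * nl (μ a)) + ∑' b, μ a * nl (ν b)) :=
        tsum_congr fun a => ENNReal.tsum_add
    _ = ∑' a, (nl (μ a) + μ a * ∑' b, nl (ν b)) := tsum_congr fun a => by
        rw [ENNReal.tsum_mul_right, ENNReal.tsum_mul_left, ν.tsum_coe, one_mul]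
    _ = (∑' a, nl (μ a)) + ∑' a, μ a * ∑' b, nl (ν b) := ENNReal.tsum_add
    _ = pmfEntropy μ + pmfEntropy ν := by
        rw [ENNReal.tsum_mul_right, μ.tsum_coe, one_mul, pmfEntropy_eq, pmfEntropy_eq]

lemma ent_pure (a : Ω) : pmfEntropy (PMF.pure a) = 0 := by
  rw [pmfEntropy_eq]
  convert tsum_zero with g
  rw [PMF.pure_apply]
  split <;> simp

lemma ent_unit (θ : PMF PUnit.{u_6+1}) : pmfEntropy θ = 0 := by
  have : θ = PMF.pure PUnit.unit := by
    ext u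
    cases u
    rw [PMF.pure_apply, if_pos rfl, ← θ.tsum_coe]
    exact (tsum_eq_single PUnit.unit (fun b hb => absurd rfl hb)).symm
  rw [this, ent_pure]


lemma margAB (θ : PMF (A × B × C)) (a : A) (b : B) :
    θ.map (fun p => (p.1, p.2.1)) (a, b) = ∑' c, θ (a, b, c) := by
  have hcomp : θ.map (fun p : A × B × C => (p.1, p.2.1))
      = (θ.map (Equiv.prodAssoc A B C).symm).map Prod.fst := by
    rw [PMF.map_comp]; rfl
  rw [hcomp, margFst]
  exact tsum_congr fun c => by rw [map_equiv_apply]; rfl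

lemma margB_fromAB (θ : PMF (A × B × C)) :
    θ.map (fun p => p.2.1) = (θ.map fun p => (p.1, p.2.1)).map Prod.snd := by
  rw [PMF.map_comp]; rfl

lemma margB_fromBC (θ : PMF (A × B × C)) :
    θ.map (fun p => p.2.1) = (θ.map Prod.snd).map Prod.fst := by
  rw [PMF.map_comp]; rfl


lemma pmf_toReal_le_one (θ : PMF Ω) (x : Ω) : (θ x).toReal ≤ 1 := by
  simpa using (ENNReal.toReal_le_toReal (θ.apply_ne_top x) ENNReal.one_ne_top).2 (θ.coe_le_one x)

lemma ssa (θ : PMF (A × B × C))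
    (hAB : pmfEntropy (θ.map fun p => (p.1, p.2.1)) ≠ ⊤)
    (hBC : pmfEntropy (θ.map Prod.snd) ≠ ⊤) :
    pmfEntropy θ + pmfEntropy (θ.map fun p => p.2.1) ≤
      pmfEntropy (θ.map fun p => (p.1, p.2.1)) + pmfEntropy (θ.map Prod.snd) := by
  classical
  set θAB := θ.map (fun p : A × B × C => (p.1, p.2.1)) with hθAB
  set θBC := θ.map (Prod.snd : A × B × C → B × C) with hθBC
  set θB := θ.map (fun p : A × B × C => p.2.1) with hθB
  have hBab : θB = θAB.map Prod.snd := margB_fromAB θ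
  have hBbc : θB = θBC.map Prod.fst := margB_fromBC θ
  have hB : pmfEntropy θB ≠ ⊤ :=
    ne_top_of_le_ne_top hBC (by rw [hBbc]; exact ent_map_le _ _)
  -- apply-level marginal identities
  have mAB : ∀ (a : A) (b : B), θAB (a, b) = ∑' c, θ (a, b, c) := margAB θ
  have mBC : ∀ q : B × C, θBC q = ∑' a, θ (a, q) := margSnd θ
  have mBfromAB : ∀ b, θB b = ∑' a, θAB (a, b) := fun b => by rw [hBab, margSnd]
  have mBfromBC : ∀ b, θB b = ∑' c, θBC (b, c) := fun b => by rw [hBbc, margFst]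
  -- ENNReal cross-entropy sums
  set T1 := ∑' ω : A × B × C, θ ω * nlog (θAB (ω.1, ω.2.1)) with hT1
  set T2 := ∑' ω : A × B × C, θ ω * nlog (θBC ω.2) with hT2
  set T3 := ∑' ω : A × B × C, θ ω * nlog (θB ω.2.1) with hT3
  have hT1e : T1 = pmfEntropy θAB := by
    rw [hT1, ENNReal.tsum_prod']
    have h1 : ∀ a : A, (∑' q : B × C, θ (a, q) * nlog (θAB (a, q.1)))
        = ∑' b, nl (θAB (a, b)) := by
      intro a
      rw [ENNReal.tsum_prod']
      refine tsum_congr fun b => ?_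
      dsimp only
      rw [ENNReal.tsum_mul_right, ← mAB a b, ← nl_eq _ (θAB.apply_ne_top _)]
    rw [tsum_congr h1, pmfEntropy_eq θAB, ENNReal.tsum_prod']
  have hT2e : T2 = pmfEntropy θBC := by
    rw [hT2, ENNReal.tsum_prod', ENNReal.tsum_comm, pmfEntropy_eq θBC]
    refine tsum_congr fun q => ?_
    dsimp only
    rw [ENNReal.tsum_mul_right, ← mBC q, ← nl_eq _ (θBC.apply_ne_top _)]
  have hT3e : T3 = pmfEntropy θB := by
    rw [hT3, ENNReal.tsum_prod']
    have h1 : ∀ a : A, (∑' q : B × C, θ (a, q) * nlog (θB q.1))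
        = ∑' b, (∑' c, θ (a, b, c)) * nlog (θB b) := by
      intro a
      rw [ENNReal.tsum_prod']
      exact tsum_congr fun b => by dsimp only; exact ENNReal.tsum_mul_right
    rw [tsum_congr h1, ENNReal.tsum_comm, pmfEntropy_eq θB]
    refine tsum_congr fun b => ?_
    rw [ENNReal.tsum_mul_right]
    have hBb : (∑' (i : A) (c : C), θ (i, b, c)) = θB b := by
      rw [mBfromBC b, ENNReal.tsum_comm]
      exact tsum_congr fun c => (mBC (b, c)).symm
    rw [hBb, ← nl_eq _ (θB.apply_ne_top _)]
  have hT1top : T1 ≠ ⊤ := by rw [hT1e]; exact hAB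
  have hT2top : T2 ≠ ⊤ := by rw [hT2e]; exact hBC
  have hT3top : T3 ≠ ⊤ := by rw [hT3e]; exact hB
  -- the comparison measure Q
  set Q : A × B × C → ℝ≥0∞ := fun ω => θAB (ω.1, ω.2.1) * (θBC ω.2 * (θB ω.2.1)⁻¹) with hQ
  have hABleB : ∀ (a : A) (b : B), θAB (a, b) ≤ θB b := fun a b => by
    rw [mBfromAB b]; exact ENNReal.le_tsum a
  have hBCleB : ∀ (b : B) (c : C), θBC (b, c) ≤ θB b := fun b c => by
    rw [mBfromBC b]; exact ENNReal.le_tsum c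
  have hQtop : ∀ ω, Q ω ≠ ⊤ := by
    rintro ⟨a, b, c⟩
    rcases eq_or_ne (θB b) 0 with h0 | h0
    · have h1 : θBC (b, c) = 0 := le_antisymm (h0 ▸ hBCleB b c) zero_le
      simp [hQ, h1]
    · exact ENNReal.mul_ne_top (θAB.apply_ne_top _)
        (ENNReal.mul_ne_top (θBC.apply_ne_top _) (ENNReal.inv_ne_top.2 h0))
  have hQsum : ∑' ω, Q ω = 1 := by
    rw [hQ, ENNReal.tsum_prod', ENNReal.tsum_comm]
    have h1 : ∀ q : B × C, (∑' a, θAB (a, q.1) * (θBC q * (θB q.1)⁻¹))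
        = θB q.1 * (θB q.1)⁻¹ * θBC q := by
      intro q
      rw [ENNReal.tsum_mul_right, ← mBfromAB q.1]
      ring
    rw [tsum_congr h1, ENNReal.tsum_prod']
    have h2 : ∀ b : B, (∑' c, θB b * (θB b)⁻¹ * θBC (b, c)) = θB b := by
      intro b
      rw [ENNReal.tsum_mul_left, ← mBfromBC b]
      rcases eq_or_ne (θB b) 0 with h0 | h0
      · simp [h0]
      · rw [ENNReal.mul_inv_cancel h0 (θB.apply_ne_top b), one_mul]
    rw [tsum_congr h2, θB.tsum_coe]
  -- real-valued versions
  set p : A × B × C → ℝ := fun ω => (θ ω).toReal with hp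
  set t1 : A × B × C → ℝ := fun ω => (θ ω * nlog (θAB (ω.1, ω.2.1))).toReal with ht1
  set t2 : A × B × C → ℝ := fun ω => (θ ω * nlog (θBC ω.2)).toReal with ht2
  set t3 : A × B × C → ℝ := fun ω => (θ ω * nlog (θB ω.2.1)).toReal with ht3
  set q : A × B × C → ℝ := fun ω => (Q ω).toReal with hq
  have hterm_ne_top : ∀ (r : ℝ≥0∞) (ω : A × B × C), θ ω * nlog r ≠ ⊤ := fun r ω =>
    ENNReal.mul_ne_top (θ.apply_ne_top ω) ENNReal.ofReal_ne_top
  have hsum_t1 : Summable t1 := ENNReal.summable_toReal hT1top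
  have hsum_t2 : Summable t2 := ENNReal.summable_toReal hT2top
  have hsum_t3 : Summable t3 := ENNReal.summable_toReal hT3top
  have hsum_p : Summable p := ENNReal.summable_toReal (by rw [θ.tsum_coe]; exact ENNReal.one_ne_top)
  have hsum_q : Summable q := ENNReal.summable_toReal (by rw [hQsum]; exact ENNReal.one_ne_top)
  have htsum_t1 : ∑' ω, t1 ω = (pmfEntropy θAB).toReal := by
    rw [← hT1e, hT1, ENNReal.tsum_toReal_eq (fun ω => hterm_ne_top _ ω)]
  have htsum_t2 : ∑' ω, t2 ω = (pmfEntropy θBC).toReal := by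
    rw [← hT2e, hT2, ENNReal.tsum_toReal_eq (fun ω => hterm_ne_top _ ω)]
  have htsum_t3 : ∑' ω, t3 ω = (pmfEntropy θB).toReal := by
    rw [← hT3e, hT3, ENNReal.tsum_toReal_eq (fun ω => hterm_ne_top _ ω)]
  have htsum_p : ∑' ω, p ω = 1 := by
    rw [hp, ← ENNReal.tsum_toReal_eq (fun ω => θ.apply_ne_top ω), θ.tsum_coe, ENNReal.toReal_one]
  have htsum_q : ∑' ω, q ω = 1 := by
    rw [hq, ← ENNReal.tsum_toReal_eq hQtop, hQsum, ENNReal.toReal_one]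
  -- rewriting the t's
  have hts : ∀ (r : ℝ≥0∞), r ≤ 1 → ∀ ω : A × B × C,
      (θ ω * nlog r).toReal = (θ ω).toReal * (- Real.log r.toReal) := by
    intro r hr ω
    rw [ENNReal.toReal_mul, nlog, ENNReal.toReal_ofReal]
    exact neg_nonneg.2 (Real.log_nonpos ENNReal.toReal_nonneg
      (by simpa using (ENNReal.toReal_le_toReal (ne_top_of_le_ne_top ENNReal.one_ne_top hr)
        ENNReal.one_ne_top).2 hr))
  -- the pointwise Gibbs inequality
  have star : ∀ ω : A × B × C, Real.negMulLog (p ω) + t3 ω + p ω ≤ t1 ω + t2 ω + q ω := by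
    rintro ⟨a, b, c⟩
    rcases eq_or_ne (θ (a, b, c)) 0 with h0 | h0
    · have hp0 : p (a, b, c) = 0 := by simp [hp, h0]
      have h1 : t1 (a, b, c) = 0 := by simp [ht1, h0]
      have h2 : t2 (a, b, c) = 0 := by simp [ht2, h0]
      have h3 : t3 (a, b, c) = 0 := by simp [ht3, h0]
      rw [hp0, h1, h2, h3, Real.negMulLog_zero]
      have : (0:ℝ) ≤ q (a, b, c) := ENNReal.toReal_nonneg
      linarith
    · -- positive case
      have hθle1 : ∀ {r : ℝ≥0∞}, θ (a, b, c) ≤ r → r ≤ 1 → 0 < r.toReal ∧ r.toReal ≤ 1 :=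
        fun {r} h1 h2 => ⟨ENNReal.toReal_pos (fun h => h0 (le_antisymm (h ▸ h1) zero_le))
          (ne_top_of_le_ne_top ENNReal.one_ne_top h2),
          by simpa using (ENNReal.toReal_le_toReal (ne_top_of_le_ne_top ENNReal.one_ne_top h2)
            ENNReal.one_ne_top).2 h2⟩
      have hθAB_ge : θ (a, b, c) ≤ θAB (a, b) := by
        rw [mAB a b]; exact ENNReal.le_tsum c
      have hθBC_ge : θ (a, b, c) ≤ θBC (b, c) := by
        rw [mBC (b, c)]; exact ENNReal.le_tsum a
      have hθB_ge : θ (a, b, c) ≤ θB b := le_trans hθAB_ge (hABleB a b)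
      obtain ⟨hab_pos, hab_le⟩ := hθle1 hθAB_ge (θAB.coe_le_one _)
      obtain ⟨hbc_pos, hbc_le⟩ := hθle1 hθBC_ge (θBC.coe_le_one _)
      obtain ⟨hb_pos, hb_le⟩ := hθle1 hθB_ge (θB.coe_le_one _)
      obtain ⟨hx_pos, hx_le⟩ := hθle1 le_rfl (θ.coe_le_one _)
      set x : ℝ := (θ (a, b, c)).toReal
      set pab : ℝ := (θAB (a, b)).toReal
      set pbc : ℝ := (θBC (b, c)).toReal
      set pb : ℝ := (θB b).toReal
      have hqv : q (a, b, c) = pab * (pbc * pb⁻¹) := by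
        rw [hq, hQ]
        dsimp only
        rw [ENNReal.toReal_mul, ENNReal.toReal_mul, ENNReal.toReal_inv]
      set r : ℝ := pab * (pbc * pb⁻¹) with hr
      have hr_pos : 0 < r := by positivity
      have h1 : t1 (a, b, c) = x * (- Real.log pab) := hts _ (θAB.coe_le_one _) _
      have h2 : t2 (a, b, c) = x * (- Real.log pbc) := hts _ (θBC.coe_le_one _) _
      have h3 : t3 (a, b, c) = x * (- Real.log pb) := hts _ (θB.coe_le_one _) _
      have hpx : p (a, b, c) = x := rfl
      rw [h1, h2, h3, hpx, hqv]
      have hlogr : Real.log r = Real.log pab + Real.log pbc - Real.log pb := by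
        rw [hr, Real.log_mul (ne_of_gt hab_pos) (by positivity),
          Real.log_mul (ne_of_gt hbc_pos) (by positivity), Real.log_inv]
        ring
      have hgibbs : x * Real.log (r / x) ≤ x * (r / x - 1) :=
        mul_le_mul_of_nonneg_left (Real.log_le_sub_one_of_pos (by positivity)) hx_pos.le
      have hlogdiv : Real.log (r / x) = Real.log r - Real.log x :=
        Real.log_div (ne_of_gt hr_pos) (ne_of_gt hx_pos)
      have hcancel : x * (r / x - 1) = r - x := by
        field_simp
      have hnml : Real.negMulLog x = - x * Real.log x := rfl
      rw [hnml]
      rw [hlogdiv] at hgibbs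
      rw [hcancel] at hgibbs
      rw [hlogr] at hgibbs
      nlinarith [hgibbs]
  -- summability of the entropy summand of θ
  have hnml_nonneg : ∀ ω : A × B × C, 0 ≤ Real.negMulLog (p ω) := fun ω =>
    Real.negMulLog_nonneg ENNReal.toReal_nonneg (pmf_toReal_le_one θ ω)
  have ht_nonneg : ∀ (f : A × B × C → ℝ≥0∞) (ω), (0:ℝ) ≤ (f ω).toReal := fun f ω =>
    ENNReal.toReal_nonneg
  have hsum_rhs : Summable (fun ω => t1 ω + t2 ω + q ω) := (hsum_t1.add hsum_t2).add hsum_q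
  have hsum_nml : Summable (fun ω => Real.negMulLog (p ω)) := by
    refine summable_of_sum_le (c := ∑' ω, (t1 ω + t2 ω + q ω)) hnml_nonneg fun u => ?_
    calc ∑ ω ∈ u, Real.negMulLog (p ω)
        ≤ ∑ ω ∈ u, (t1 ω + t2 ω + q ω) := Finset.sum_le_sum fun ω _ => by
          have h := star ω
          have h3 : 0 ≤ t3 ω := ENNReal.toReal_nonneg
          have hpω : 0 ≤ p ω := ENNReal.toReal_nonneg
          linarith
      _ ≤ ∑' ω, (t1 ω + t2 ω + q ω) := Summable.sum_le_tsum u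
          (fun ω _ => by positivity) hsum_rhs
  -- value of the entropy of θ
  have hentθ : pmfEntropy θ = ENNReal.ofReal (∑' ω, Real.negMulLog (p ω)) :=
    (ENNReal.ofReal_tsum_of_nonneg hnml_nonneg hsum_nml).symm
  -- the main real inequality
  have hmain : (∑' ω, Real.negMulLog (p ω)) + (pmfEntropy θB).toReal
      ≤ (pmfEntropy θAB).toReal + (pmfEntropy θBC).toReal := by
    have hle : ∑' ω, (Real.negMulLog (p ω) + t3 ω + p ω) ≤ ∑' ω, (t1 ω + t2 ω + q ω) :=
      Summable.tsum_le_tsum star ((hsum_nml.add hsum_t3).add hsum_p) hsum_rhs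
    rw [Summable.tsum_add (hsum_nml.add hsum_t3) hsum_p, Summable.tsum_add hsum_nml hsum_t3,
      Summable.tsum_add (hsum_t1.add hsum_t2) hsum_q, Summable.tsum_add hsum_t1 hsum_t2,
      htsum_p, htsum_q, htsum_t1, htsum_t2, htsum_t3] at hle
    linarith
  -- conclude in ℝ≥0∞
  rw [hentθ, ← ENNReal.ofReal_toReal hB, ← ENNReal.ofReal_toReal hAB, ← ENNReal.ofReal_toReal hBC,
    ← ENNReal.ofReal_add (tsum_nonneg hnml_nonneg) ENNReal.toReal_nonneg,
    ← ENNReal.ofReal_add ENNReal.toReal_nonneg ENNReal.toReal_nonneg]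
  exact ENNReal.ofReal_le_ofReal hmain


section Group
variable {G : Type*} [Group G]

lemma prod_map_fst (μ : PMF A) (ν : PMF B) : (pmfProd μ ν).map Prod.fst = μ := by
  rw [pmfProd, PMF.map_bind]
  have h : (fun a => (ν.map fun b => (a, b)).map Prod.fst) = fun a : A => PMF.pure a := by
    funext a
    rw [PMF.map_comp]
    exact PMF.map_const ν a
  rw [h, PMF.bind_pure]

lemma conv_eq_map_prod (μ ν : PMF G) :
    pmfConv μ ν = (pmfProd μ ν).map fun p => p.1 * p.2 := by
  rw [pmfConv, pmfProd, PMF.map_bind]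
  refine congrArg _ (funext fun a => ?_)
  rw [PMF.map_comp]
  rfl

lemma ent_conv_le (μ ν : PMF G) :
    pmfEntropy (pmfConv μ ν) ≤ pmfEntropy μ + pmfEntropy ν := by
  rw [conv_eq_map_prod, ← ent_prod μ ν]
  exact ent_map_le _ _

lemma ent_pair_le (θ : PMF (A × C)) (h1 : pmfEntropy (θ.map Prod.fst) ≠ ⊤)
    (h2 : pmfEntropy (θ.map Prod.snd) ≠ ⊤) :
    pmfEntropy θ ≤ pmfEntropy (θ.map Prod.fst) + pmfEntropy (θ.map Prod.snd) := by
  set θ' : PMF (A × PUnit.{1} × C) := θ.map fun p => (p.1, PUnit.unit, p.2) with hθ'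
  have hinj : Function.Injective (fun p : A × C => (p.1, PUnit.unit, p.2)) := by
    rintro ⟨a, c⟩ ⟨a', c'⟩ h
    simp only [Prod.mk.injEq] at h
    exact Prod.ext h.1 h.2.2
  have hE : pmfEntropy θ' = pmfEntropy θ := ent_map_injective θ hinj
  have hABeq : θ'.map (fun p => (p.1, p.2.1)) = (θ.map Prod.fst).map fun a => (a, PUnit.unit) := by
    rw [hθ', PMF.map_comp, PMF.map_comp]; rfl
  have hBCeq : θ'.map Prod.snd = (θ.map Prod.snd).map fun c => (PUnit.unit, c) := by
    rw [hθ', PMF.map_comp, PMF.map_comp]; rfl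
  have hABinj : Function.Injective (fun a : A => (a, PUnit.unit)) := fun a a' h => by
    simpa using congrArg Prod.fst h
  have hBCinj : Function.Injective (fun c : C => (PUnit.unit, c)) := fun c c' h => by
    simpa using congrArg Prod.snd h
  have hentAB : pmfEntropy (θ'.map fun p => (p.1, p.2.1)) = pmfEntropy (θ.map Prod.fst) := by
    rw [hABeq]; exact ent_map_injective _ hABinj
  have hentBC : pmfEntropy (θ'.map Prod.snd) = pmfEntropy (θ.map Prod.snd) := by
    rw [hBCeq]; exact ent_map_injective _ hBCinj
  have := ssa θ' (by rw [hentAB]; exact h1) (by rw [hentBC]; exact h2)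
  rw [hE, hentAB, hentBC, ent_unit (θ'.map fun p => p.2.1), add_zero] at this
  exact this

lemma ent_le_conv_right (μ ν : PMF G) (hμ : pmfEntropy μ ≠ ⊤) :
    pmfEntropy ν ≤ pmfEntropy (pmfConv μ ν) := by
  rcases eq_or_ne (pmfEntropy (pmfConv μ ν)) ⊤ with htop | htop
  · rw [htop]; exact le_top
  set J : PMF (G × G) := (pmfProd μ ν).map fun p => (p.1, p.1 * p.2) with hJ
  have hinj : Function.Injective (fun p : G × G => (p.1, p.1 * p.2)) := by
    rintro ⟨a, b⟩ ⟨a', b'⟩ h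
    simp only [Prod.mk.injEq] at h
    obtain ⟨rfl, h2⟩ := h
    exact Prod.ext rfl (mul_left_cancel h2)
  have hentJ : pmfEntropy J = pmfEntropy μ + pmfEntropy ν := by
    rw [hJ, ent_map_injective _ hinj, ent_prod]
  have hfst : J.map Prod.fst = μ := by
    rw [hJ, PMF.map_comp]
    exact prod_map_fst μ ν
  have hsnd : J.map Prod.snd = pmfConv μ ν := by
    rw [hJ, PMF.map_comp, conv_eq_map_prod]
    rfl
  have hle := ent_pair_le J (by rw [hfst]; exact hμ) (by rw [hsnd]; exact htop)
  rw [hentJ, hfst, hsnd] at hle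
  exact (ENNReal.add_le_add_iff_left hμ).1 hle


lemma conv_pure_right (θ : PMF G) : pmfConv θ (PMF.pure 1) = θ := by
  rw [pmfConv]
  have h : (fun h : G => (PMF.pure 1).map fun k => h * k) = fun h : G => PMF.pure h := by
    funext h
    rw [PMF.pure_map, mul_one]
  rw [h, PMF.bind_pure]

lemma conv_assoc (a b c : PMF G) : pmfConv (pmfConv a b) c = pmfConv a (pmfConv b c) := by
  simp only [pmfConv, PMF.bind_bind, PMF.bind_map, PMF.map_bind, PMF.map_comp]
  refine congrArg _ (funext fun x => congrArg _ (funext fun y => ?_))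
  refine congrArg (fun f => PMF.map f c) ?_
  funext k
  simp [Function.comp, mul_assoc]

lemma key (α β ν : PMF G) (hα : pmfEntropy α ≠ ⊤) (hβ : pmfEntropy β ≠ ⊤)
    (hν : pmfEntropy ν ≠ ⊤) :
    pmfEntropy β + pmfEntropy (pmfConv (pmfConv α β) ν) ≤
      pmfEntropy (pmfConv β ν) + pmfEntropy (pmfConv α β) := by
  classical
  set P : PMF (G × G × G) := pmfProd α (pmfProd β ν) with hP
  set e : G × G × G → G × G × G := fun p => (p.1, p.1 * p.2.1 * p.2.2, p.1 * p.2.1) with he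
  have heinj : Function.Injective e := by
    rintro ⟨x, y, z⟩ ⟨x', y', z'⟩ h
    simp only [he, Prod.mk.injEq] at h
    obtain ⟨rfl, h2, h3⟩ := h
    have hy : y = y' := mul_left_cancel h3
    subst hy
    exact Prod.ext rfl (Prod.ext rfl (mul_left_cancel h2))
  set θ : PMF (G × G × G) := P.map e with hθ
  have hg1inj : Function.Injective (fun p : G × G => (p.1, p.1 * p.2)) := by
    rintro ⟨a, b⟩ ⟨a', b'⟩ h
    simp only [Prod.mk.injEq] at h
    obtain ⟨rfl, h2⟩ := h
    exact Prod.ext rfl (mul_left_cancel h2)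
  have hg2inj : Function.Injective (fun p : G × G => (p.1 * p.2, p.1)) := by
    rintro ⟨a, b⟩ ⟨a', b'⟩ h
    simp only [Prod.mk.injEq] at h
    obtain ⟨h1, rfl⟩ := h
    exact Prod.ext rfl (mul_left_cancel h1)
  have hABm : θ.map (fun p => (p.1, p.2.1))
      = (pmfProd α (pmfConv β ν)).map (fun p : G × G => (p.1, p.1 * p.2)) := by
    rw [hθ, PMF.map_comp, hP]
    simp only [pmfProd, pmfConv, PMF.map_bind, PMF.bind_map, PMF.bind_bind, PMF.map_comp, Function.comp_def, Function.comp_apply]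
    refine congrArg _ (funext fun x => congrArg _ (funext fun y => ?_))
    refine congrArg (fun f => PMF.map f ν) ?_
    funext z
    simp [he, Function.comp, mul_assoc]
  have hBCm : θ.map Prod.snd
      = (pmfProd (pmfConv α β) ν).map (fun p : G × G => (p.1 * p.2, p.1)) := by
    rw [hθ, PMF.map_comp, hP]
    simp only [pmfProd, pmfConv, PMF.map_bind, PMF.bind_map, PMF.bind_bind, PMF.map_comp, Function.comp_def, Function.comp_apply, he]
  have hBm : θ.map (fun p => p.2.1) = pmfConv (pmfConv α β) ν := by
    rw [hθ, PMF.map_comp, hP]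
    simp only [pmfProd, pmfConv, PMF.map_bind, PMF.bind_map, PMF.bind_bind, PMF.map_comp, Function.comp_def, Function.comp_apply, he]
  have hentθ : pmfEntropy θ = pmfEntropy α + (pmfEntropy β + pmfEntropy ν) := by
    rw [hθ, ent_map_injective P heinj, hP, ent_prod, ent_prod]
  have hentAB : pmfEntropy (θ.map fun p => (p.1, p.2.1))
      = pmfEntropy α + pmfEntropy (pmfConv β ν) := by
    rw [hABm, ent_map_injective _ hg1inj, ent_prod]
  have hentBC : pmfEntropy (θ.map Prod.snd)
      = pmfEntropy (pmfConv α β) + pmfEntropy ν := by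
    rw [hBCm, ent_map_injective _ hg2inj, ent_prod]
  have hconvβν : pmfEntropy (pmfConv β ν) ≠ ⊤ :=
    ne_top_of_le_ne_top (ENNReal.add_ne_top.2 ⟨hβ, hν⟩) (ent_conv_le β ν)
  have hconvαβ : pmfEntropy (pmfConv α β) ≠ ⊤ :=
    ne_top_of_le_ne_top (ENNReal.add_ne_top.2 ⟨hα, hβ⟩) (ent_conv_le α β)
  have hssa := ssa θ (by rw [hentAB]; exact ENNReal.add_ne_top.2 ⟨hα, hconvβν⟩)
    (by rw [hentBC]; exact ENNReal.add_ne_top.2 ⟨hconvαβ, hν⟩)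
  rw [hentθ, hentAB, hentBC, hBm] at hssa
  have e1 : pmfEntropy α + (pmfEntropy β + pmfEntropy ν) + pmfEntropy (pmfConv (pmfConv α β) ν)
      = (pmfEntropy α + pmfEntropy ν)
        + (pmfEntropy β + pmfEntropy (pmfConv (pmfConv α β) ν)) := by ring
  have e2 : pmfEntropy α + pmfEntropy (pmfConv β ν)
        + (pmfEntropy (pmfConv α β) + pmfEntropy ν)
      = (pmfEntropy α + pmfEntropy ν)
        + (pmfEntropy (pmfConv β ν) + pmfEntropy (pmfConv α β)) := by ring
  rw [e1, e2] at hssa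
  exact (ENNReal.add_le_add_iff_left (ENNReal.add_ne_top.2 ⟨hα, hν⟩)).1 hssa

end Group
end EntropyAux

/-- for measures of finite entropy, the limit
`h_k = lim_n [H(μ_0*⋯*μ_n) − H(μ_k*⋯*μ_n)]` exists and is nonnegative. -/
theorem entropy_defect_limit_exists {G : Type*} [Group G] [Countable G]
    (μs : ℕ → PMF G) (hfin : ∀ n, pmfEntropy (μs n) ≠ ⊤) (k : ℕ) :
    ∃ h : ℝ, 0 ≤ h ∧
      Tendsto (fun n : ℕ =>
          (pmfEntropy (convPrefix μs (n + 1))).toReal -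
            (pmfEntropy (convPrefix (fun i => μs (k + i)) (n + 1 - k))).toReal)
        atTop (𝓝 h) := by
  classical
  have hfinPre : ∀ (f : ℕ → PMF G), (∀ n, pmfEntropy (f n) ≠ ⊤) →
      ∀ m, pmfEntropy (convPrefix f m) ≠ ⊤ := by
    intro f hf m
    induction m with
    | zero =>
      show pmfEntropy (PMF.pure 1) ≠ ⊤
      rw [ent_pure]
      exact ENNReal.zero_ne_top
    | succ n ih =>
      show pmfEntropy (pmfConv (convPrefix f n) (f n)) ≠ ⊤
      exact ne_top_of_le_ne_top (ENNReal.add_ne_top.2 ⟨ih, hf n⟩) (ent_conv_le _ _)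
  set shifted : ℕ → PMF G := fun i => μs (k + i) with hshifted
  have hfinShift : ∀ m, pmfEntropy (convPrefix shifted m) ≠ ⊤ :=
    hfinPre shifted fun i => hfin (k + i)
  set Ck : PMF G := convPrefix μs k with hCk
  have hCkfin : pmfEntropy Ck ≠ ⊤ := hfinPre μs hfin k
  have hsplit : ∀ m, convPrefix μs (k + m) = pmfConv Ck (convPrefix shifted m) := by
    intro m
    induction m with
    | zero => exact (conv_pure_right _).symm
    | succ n ih =>
      calc convPrefix μs (k + (n + 1))
          = pmfConv (convPrefix μs (k + n)) (μs (k + n)) := rfl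
        _ = pmfConv (pmfConv Ck (convPrefix shifted n)) (μs (k + n)) := by rw [ih]
        _ = pmfConv Ck (pmfConv (convPrefix shifted n) (μs (k + n))) := conv_assoc _ _ _
        _ = pmfConv Ck (convPrefix shifted (n + 1)) := rfl
  set F : ℕ → ℝ := fun n =>
    (pmfEntropy (convPrefix μs (n + 1))).toReal -
      (pmfEntropy (convPrefix shifted (n + 1 - k))).toReal with hF
  set b : ℕ → ℝ := fun m => F (m + k) with hb
  have hbval : ∀ m, b m =
      (pmfEntropy (pmfConv Ck (convPrefix shifted (m + 1)))).toReal -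
        (pmfEntropy (convPrefix shifted (m + 1))).toReal := by
    intro m
    have h1 : m + k + 1 = k + (m + 1) := by omega
    have h2 : k + (m + 1) - k = m + 1 := by omega
    show (pmfEntropy (convPrefix μs (m + k + 1))).toReal -
        (pmfEntropy (convPrefix shifted (m + k + 1 - k))).toReal = _
    rw [h1, h2, hsplit (m + 1)]
  have hconvfin : ∀ m, pmfEntropy (pmfConv Ck (convPrefix shifted m)) ≠ ⊤ := fun m =>
    ne_top_of_le_ne_top (ENNReal.add_ne_top.2 ⟨hCkfin, hfinShift m⟩) (ent_conv_le _ _)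
  have hbnonneg : ∀ m, 0 ≤ b m := by
    intro m
    rw [hbval m]
    have hle := ent_le_conv_right Ck (convPrefix shifted (m + 1)) hCkfin
    have := (ENNReal.toReal_le_toReal (hfinShift (m + 1)) (hconvfin (m + 1))).2 hle
    linarith
  have hmono : ∀ m, b (m + 1) ≤ b m := by
    intro m
    rw [hbval m, hbval (m + 1)]
    set B : PMF G := convPrefix shifted (m + 1) with hB
    set ν : PMF G := shifted (m + 1) with hν
    have hνfin : pmfEntropy ν ≠ ⊤ := hfin (k + (m + 1))
    have hBfin : pmfEntropy B ≠ ⊤ := hfinShift (m + 1)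
    have hkey := key Ck B ν hCkfin hBfin hνfin
    have hB2 : convPrefix shifted (m + 1 + 1) = pmfConv B ν := rfl
    have hassoc : pmfConv Ck (pmfConv B ν) = pmfConv (pmfConv Ck B) ν :=
      (conv_assoc _ _ _).symm
    rw [hB2, hassoc]
    -- finiteness of all four entropies
    have f1 : pmfEntropy (pmfConv (pmfConv Ck B) ν) ≠ ⊤ :=
      ne_top_of_le_ne_top (ENNReal.add_ne_top.2 ⟨hconvfin (m + 1), hνfin⟩) (ent_conv_le _ _)
    have f2 : pmfEntropy (pmfConv B ν) ≠ ⊤ :=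
      ne_top_of_le_ne_top (ENNReal.add_ne_top.2 ⟨hBfin, hνfin⟩) (ent_conv_le _ _)
    have f3 : pmfEntropy (pmfConv Ck B) ≠ ⊤ := hconvfin (m + 1)
    have hkey' := (ENNReal.toReal_le_toReal
      (ENNReal.add_ne_top.2 ⟨hBfin, f1⟩) (ENNReal.add_ne_top.2 ⟨f2, f3⟩)).2 hkey
    rw [ENNReal.toReal_add hBfin f1, ENNReal.toReal_add f2 f3] at hkey'
    linarith
  have hbanti : Antitone b := antitone_nat_of_succ_le hmono
  have hbdd : BddBelow (Set.range b) := ⟨0, by rintro x ⟨m, rfl⟩; exact hbnonneg m⟩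
  have htend : Tendsto b atTop (𝓝 (⨅ m, b m)) := tendsto_atTop_ciInf hbanti hbdd
  have hpos : 0 ≤ ⨅ m, b m := le_ciInf hbnonneg
  refine ⟨⨅ m, b m, hpos, ?_⟩
  have : Tendsto (fun n => F (n + k)) atTop (𝓝 (⨅ m, b m)) := htend
  exact (tendsto_add_atTop_iff_nat k).1 this
end

section
/- In the setting of the previous statement, if T is in addition ergodic, then the skew shift T̄(ω,h) = (Tω, Sh) is ergodic with respect to Q. -/
open scoped ENNReal
open Filter Topology MeasureTheory

set_option linter.unusedSectionVars false
set_option maxHeartbeats 1000000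

/-- `convIter T μ ω n = μ^ω * μ^{Tω} * ⋯ * μ^{T^{n-1}ω}` (n factors). -/
noncomputable def convIter {Ω G : Type*} [Group G] (T : Ω → Ω) (μ : Ω → PMF G)
    (ω : Ω) : ℕ → PMF G
  | 0 => PMF.pure 1
  | n + 1 => pmfConv (convIter T μ ω n) (μ (T^[n] ω))

/-- `partialProd h n = h 0 * h 1 * ⋯ * h (n-1)`. -/
def partialProd {G : Type*} [Group G] (h : ℕ → G) (n : ℕ) : G :=
  ((List.range n).map h).prod

/-- The skew shift `T̄(ω, h) = (Tω, Sh)` on `Ω × G^ℕ`, where `(Sh)_n = h_{n+1}`. -/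
def skewShift {Ω G : Type*} (T : Ω → Ω) (p : Ω × (ℕ → G)) : Ω × (ℕ → G) :=
  (T p.1, fun n => p.2 (n + 1))

/-- `Q` is the measure on `Ω × G^ℕ` whose `Ω`-marginal is `lam` and whose conditional
measure over `ω` is the infinite product `⊗_i μ^{T^i ω}`, characterized by its values
on cylinder sets. -/
def IsIncrementMeasure {Ω G : Type*} [MeasurableSpace Ω] [Group G] [MeasurableSpace G]
    (lam : Measure Ω) (T : Ω → Ω) (μ : Ω → PMF G)
    (Q : Measure (Ω × (ℕ → G))) : Prop :=
  ∀ (A : Set Ω), MeasurableSet A → ∀ (n : ℕ) (s : ℕ → G),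
    Q {p : Ω × (ℕ → G) | p.1 ∈ A ∧ ∀ i < n, p.2 i = s i} =
      ∫⁻ ω in A, ∏ i ∈ Finset.range n, μ (T^[i] ω) (s i) ∂lam

namespace SkewAux

variable {G : Type*} [Nonempty G] [Countable G] [MeasurableSpace G] [DiscreteMeasurableSpace G]

/-- Cylinder set fixing the first `n` coordinates to `s`. -/
def cyl (n : ℕ) (s : ℕ → G) : Set (ℕ → G) := {h | ∀ i < n, h i = s i}

lemma cyl_congr {n : ℕ} {s t : ℕ → G} (h : ∀ i < n, s i = t i) : cyl n s = cyl n t := by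
  ext x
  exact forall₂_congr fun i hi => by rw [h i hi]

lemma measurableSet_cyl (n : ℕ) (s : ℕ → G) : MeasurableSet (cyl n s) := by
  have : cyl n s = ⋂ (i : ℕ) (_ : i < n), (fun h : ℕ → G => h i) ⁻¹' {s i} := by
    ext h; simp [cyl]
  rw [this]
  exact MeasurableSet.biInter (Set.to_countable _)
    (fun i _ => (measurable_pi_apply i) (measurableSet_singleton _))

/-- The collection of cylinder sets. -/
def cylSet : Set (Set (ℕ → G)) := {C | ∃ n s, C = cyl n s}

lemma univ_mem_cylSet : (Set.univ : Set (ℕ → G)) ∈ cylSet := by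
  refine ⟨0, fun _ => Classical.arbitrary G, ?_⟩
  ext h; simp [cyl]

lemma isPiSystem_cyl : IsPiSystem (cylSet (G := G)) := by
  rintro _ ⟨n, s, rfl⟩ _ ⟨m, t, rfl⟩ hne
  rcases le_total n m with h | h
  · refine ⟨m, t, ?_⟩
    obtain ⟨x, hx1, hx2⟩ := hne
    ext h'; constructor
    · rintro ⟨h1, h2⟩; exact h2
    · intro h2
      refine ⟨fun i hi => ?_, h2⟩
      rw [h2 i (lt_of_lt_of_le hi h), ← hx2 i (lt_of_lt_of_le hi h), hx1 i hi]
  · refine ⟨n, s, ?_⟩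
    obtain ⟨x, hx1, hx2⟩ := hne
    ext h'; constructor
    · rintro ⟨h1, h2⟩; exact h1
    · intro h1
      refine ⟨h1, fun i hi => ?_⟩
      rw [h1 i (lt_of_lt_of_le hi h), ← hx1 i (lt_of_lt_of_le hi h), hx2 i hi]

lemma eval_preimage_singleton_mem (i : ℕ) (g : G) :
    MeasurableSet[MeasurableSpace.generateFrom (cylSet (G := G))]
      ((fun h : ℕ → G => h i) ⁻¹' {g}) := by
  classical
  have : (fun h : ℕ → G => h i) ⁻¹' {g} =
      ⋃ t : Fin i → G, cyl (i + 1) (fun k => if h : k < i then t ⟨k, h⟩ else g) := by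
    ext h; constructor
    · intro hh
      refine Set.mem_iUnion.2 ⟨fun k => h k, fun k hk => ?_⟩
      rcases lt_or_ge k i with h' | h'
      · simp [h']
      · have : k = i := le_antisymm (Nat.lt_succ_iff.mp hk) h'
        subst this; simpa using hh
    · intro hh
      obtain ⟨t, ht⟩ := Set.mem_iUnion.1 hh
      have := ht i (Nat.lt_succ_self i)
      simpa using this
  rw [this]
  exact MeasurableSet.iUnion fun t =>
    MeasurableSpace.measurableSet_generateFrom ⟨_, _, rfl⟩

lemma generateFrom_cyl :
    MeasurableSpace.generateFrom (cylSet (G := G)) = MeasurableSpace.pi := by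
  apply le_antisymm
  · apply MeasurableSpace.generateFrom_le
    rintro _ ⟨n, s, rfl⟩
    exact measurableSet_cyl n s
  · rw [MeasurableSpace.pi]
    apply iSup_le
    intro i
    rw [MeasurableSpace.comap_le_iff_le_map]
    intro B _
    have : (fun h : ℕ → G => h i) ⁻¹' B = ⋃ g ∈ B, (fun h : ℕ → G => h i) ⁻¹' {g} := by
      ext h; simp
    show MeasurableSet[MeasurableSpace.generateFrom cylSet] ((fun h : ℕ → G => h i) ⁻¹' B)
    rw [this]
    exact MeasurableSet.biUnion (Set.to_countable _)
      (fun g _ => eval_preimage_singleton_mem i g)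

/-- Two probability measures agreeing on cylinders are equal. -/
lemma ext_cyl (ν₁ ν₂ : Measure (ℕ → G)) [IsProbabilityMeasure ν₁] [IsProbabilityMeasure ν₂]
    (h : ∀ n s, ν₁ (cyl n s) = ν₂ (cyl n s)) : ν₁ = ν₂ := by
  refine MeasureTheory.ext_of_generate_finite cylSet generateFrom_cyl.symm isPiSystem_cyl
    ?_ (by simp)
  rintro _ ⟨n, s, rfl⟩
  exact h n s

/-- Prepend a value to a sequence. -/
def cons (g : G) (s : ℕ → G) : ℕ → G := fun k => Nat.casesOn k g fun k' => s k'

@[simp] lemma cons_zero (g : G) (s : ℕ → G) : cons g s 0 = g := rfl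
@[simp] lemma cons_succ (g : G) (s : ℕ → G) (k : ℕ) : cons g s (k + 1) = s k := rfl

lemma shift_preimage_cyl (n : ℕ) (s : ℕ → G) :
    (fun (h : ℕ → G) k => h (k + 1)) ⁻¹' cyl n s = ⋃ g : G, cyl (n + 1) (cons g s) := by
  ext h
  simp only [Set.mem_preimage, Set.mem_iUnion, cyl, Set.mem_setOf_eq]
  constructor
  · intro hh
    refine ⟨h 0, fun i hi => ?_⟩
    cases i with
    | zero => rfl
    | succ i => exact hh i (by omega)
  · rintro ⟨g, hg⟩ i hi
    exact hg (i + 1) (by omega)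

lemma pairwise_disjoint_cons (n : ℕ) (s : ℕ → G) :
    Pairwise (Function.onFun Disjoint fun g : G => cyl (n + 1) (cons g s)) := by
  intro a b hab
  simp only [Function.onFun, Set.disjoint_left]
  intro h ha hb
  have h1 := ha 0 (by omega)
  have h2 := hb 0 (by omega)
  exact hab ((h1.symm.trans h2 : (a : G) = b))

/-- Key combinatorial step: from the cylinder formula deduce the value on
`{h | ∀ i ∈ S, h i = g i}` for an arbitrary finset `S`. -/
lemma finset_formula (ν : Measure (ℕ → G)) [IsProbabilityMeasure ν]
    (c : ℕ → G → ℝ≥0∞) (hc : ∀ i, ∑' g, c i g = 1)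
    (hν : ∀ n s, ν (cyl n s) = ∏ i ∈ Finset.range n, c i (s i)) :
    ∀ (S : Finset ℕ) (g : ℕ → G),
      ν {h | ∀ i ∈ S, h i = g i} = ∏ i ∈ S, c i (g i) := by
  classical
  suffices H : ∀ (k N : ℕ) (S : Finset ℕ), S ⊆ Finset.range N →
      (Finset.range N \ S).card = k →
      ∀ g : ℕ → G, ν {h | ∀ i ∈ S, h i = g i} = ∏ i ∈ S, c i (g i) by
    intro S g
    refine H (Finset.range (S.sup id + 1) \ S).card (S.sup id + 1) S ?_ rfl g
    intro i hi
    exact Finset.mem_range.2 (Nat.lt_succ_of_le (Finset.le_sup (f := id) hi))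
  intro k
  induction k with
  | zero =>
    intro N S hsub hcard g
    have hS : S = Finset.range N := by
      have := Finset.card_eq_zero.1 hcard
      have hsub2 : Finset.range N ⊆ S := fun i hi => by
        by_contra hnot
        exact absurd (Finset.mem_sdiff.2 ⟨hi, hnot⟩) (by simp [this])
      exact le_antisymm hsub hsub2
    subst hS
    have : {h : ℕ → G | ∀ i ∈ Finset.range N, h i = g i} = cyl N g := by
      ext h; simp [cyl]
    rw [this, hν]
  | succ k ih =>
    intro N S hsub hcard g
    obtain ⟨j, hj⟩ : ∃ j, j ∈ Finset.range N \ S := by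
      rcases Finset.card_pos.1 (by omega : 0 < (Finset.range N \ S).card) with ⟨j, hj⟩
      exact ⟨j, hj⟩
    obtain ⟨hjN, hjS⟩ := Finset.mem_sdiff.1 hj
    have hdecomp : {h : ℕ → G | ∀ i ∈ S, h i = g i} =
        ⋃ a : G, {h : ℕ → G | ∀ i ∈ insert j S, h i = Function.update g j a i} := by
      ext h
      simp only [Set.mem_iUnion, Set.mem_setOf_eq]
      constructor
      · intro hh
        refine ⟨h j, fun i hi => ?_⟩
        rcases Finset.mem_insert.1 hi with rfl | hi
        · simp
        · have hij : i ≠ j := fun e => hjS (e ▸ hi)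
          rw [Function.update_of_ne hij]
          exact hh i hi
      · rintro ⟨a, ha⟩ i hi
        have hij : i ≠ j := fun e => hjS (e ▸ hi)
        have := ha i (Finset.mem_insert_of_mem hi)
        rwa [Function.update_of_ne hij] at this
    have hmeas : ∀ (g' : ℕ → G) (S' : Finset ℕ),
        MeasurableSet {h : ℕ → G | ∀ i ∈ S', h i = g' i} := by
      intro g' S'
      have : {h : ℕ → G | ∀ i ∈ S', h i = g' i} =
          ⋂ i ∈ S', (fun h : ℕ → G => h i) ⁻¹' {g' i} := by ext h; simp
      rw [this]
      exact MeasurableSet.biInter (Set.to_countable _)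
        (fun i _ => (measurable_pi_apply i) (measurableSet_singleton _))
    have hdisj : Pairwise (Function.onFun Disjoint
        (fun a : G => {h : ℕ → G | ∀ i ∈ insert j S, h i = Function.update g j a i})) := by
      intro a b hab
      simp only [Function.onFun, Set.disjoint_left]
      intro h ha hb
      have h1 := ha j (Finset.mem_insert_self j S)
      have h2 := hb j (Finset.mem_insert_self j S)
      simp only [Function.update_self] at h1 h2
      exact hab (h1 ▸ h2)
    rw [hdecomp, measure_iUnion hdisj (fun a => hmeas _ _)]
    have hcard' : (Finset.range N \ insert j S).card = k := by
      rw [Finset.sdiff_insert]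
      rw [Finset.card_erase_of_mem hj, hcard]
      omega
    have hstep : ∀ a : G,
        ν {h : ℕ → G | ∀ i ∈ insert j S, h i = Function.update g j a i} =
          c j a * ∏ i ∈ S, c i (g i) := by
      intro a
      rw [ih N (insert j S) (Finset.insert_subset hjN hsub) hcard' _]
      rw [Finset.prod_insert hjS]
      congr 1
      · simp
      · refine Finset.prod_congr rfl fun i hi => ?_
        have hij : i ≠ j := fun e => hjS (e ▸ hi)
        rw [Function.update_of_ne hij]
    rw [tsum_congr hstep, ENNReal.tsum_mul_right, hc j, one_mul]

/-- Coordinate σ-algebras. -/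
def coordSA (i : ℕ) : MeasurableSpace (ℕ → G) :=
  MeasurableSpace.comap (fun h : ℕ → G => h i) inferInstance

lemma coordSA_le (i : ℕ) : coordSA (G := G) i ≤ MeasurableSpace.pi :=
  (measurable_pi_apply i).comap_le

lemma coordSA_eq_generateFrom (i : ℕ) :
    coordSA (G := G) i =
      MeasurableSpace.generateFrom (Set.range fun g : G => (fun h : ℕ → G => h i) ⁻¹' {g}) := by
  apply le_antisymm
  · rintro _ ⟨B, hB, rfl⟩
    have : (fun h : ℕ → G => h i) ⁻¹' B = ⋃ g ∈ B, (fun h : ℕ → G => h i) ⁻¹' {g} := by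
      ext h; simp
    rw [this]
    exact MeasurableSet.biUnion (Set.to_countable _)
      (fun g _ => MeasurableSpace.measurableSet_generateFrom ⟨g, rfl⟩)
  · apply MeasurableSpace.generateFrom_le
    rintro _ ⟨g, rfl⟩
    exact MeasurableSpace.measurableSet_comap.2 ⟨{g}, .of_discrete, rfl⟩

open ProbabilityTheory in
lemma iIndep_coord (ν : Measure (ℕ → G)) [IsProbabilityMeasure ν]
    (c : ℕ → G → ℝ≥0∞) (hc : ∀ i, ∑' g, c i g = 1)
    (hν : ∀ n s, ν (cyl n s) = ∏ i ∈ Finset.range n, c i (s i)) :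
    iIndep (coordSA (G := G)) ν := by
  classical
  have key := finset_formula ν c hc hν
  refine iIndepSets.iIndep coordSA_le
    (fun i => Set.range fun g : G => (fun h : ℕ → G => h i) ⁻¹' {g})
    (fun i => ?_) coordSA_eq_generateFrom ?_
  · rintro _ ⟨g, rfl⟩ _ ⟨g', rfl⟩ hne
    obtain ⟨x, hx1, hx2⟩ := hne
    simp only [Set.mem_preimage, Set.mem_singleton_iff] at hx1 hx2
    refine ⟨g, ?_⟩
    rw [← hx1, hx2]
    simp
  · rw [iIndepSets_iff]
    intro S f hf
    have hg : ∀ i ∈ S, ∃ g : G, f i = (fun h : ℕ → G => h i) ⁻¹' {g} := by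
      intro i hi
      obtain ⟨g, hg⟩ := hf i hi
      exact ⟨g, hg.symm⟩
    choose! g hgf using hg
    have hInt : (⋂ i ∈ S, f i) = {h : ℕ → G | ∀ i ∈ S, h i = g i} := by
      ext h
      simp only [Set.mem_iInter, Set.mem_setOf_eq]
      refine forall₂_congr fun i hi => ?_
      rw [hgf i hi]
      simp
    have hSingle : ∀ i ∈ S, ν (f i) = c i (g i) := by
      intro i hi
      rw [hgf i hi]
      have : (fun h : ℕ → G => h i) ⁻¹' {g i} =
          {h : ℕ → G | ∀ k ∈ ({i} : Finset ℕ), h k = g k} := by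
        ext h; simp
      rw [this, key {i} g, Finset.prod_singleton]
    rw [hInt, key S g]
    exact (Finset.prod_congr rfl hSingle).symm

open ProbabilityTheory in
/-- Kolmogorov 0-1 law for tail sets under a measure with independent coordinates. -/
lemma zero_one (ν : Measure (ℕ → G)) [IsProbabilityMeasure ν]
    (c : ℕ → G → ℝ≥0∞) (hc : ∀ i, ∑' g, c i g = 1)
    (hν : ∀ n s, ν (cyl n s) = ∏ i ∈ Finset.range n, c i (s i))
    (t : Set (ℕ → G))
    (ht : ∀ n : ℕ, ∃ u : Set (ℕ → G), MeasurableSet u ∧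
      t = (fun (h : ℕ → G) k => h (k + n)) ⁻¹' u) :
    ν t = 0 ∨ ν t = 1 := by
  refine measure_zero_or_one_of_measurableSet_limsup_atTop coordSA_le
    (iIndep_coord ν c hc hν) ?_
  rw [limsup_eq_iInf_iSup_of_nat, MeasurableSpace.measurableSet_iInf]
  intro n
  obtain ⟨u, hu, htu⟩ := ht n
  have hshift : @Measurable (ℕ → G) (ℕ → G) (⨆ i, ⨆ (_ : i ≥ n), coordSA (G := G) i) _
      (fun h k => h (k + n)) := by
    rw [@measurable_pi_iff]
    intro k
    have hle : coordSA (G := G) (k + n) ≤ ⨆ i, ⨆ (_ : i ≥ n), coordSA (G := G) i :=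
      le_iSup₂ (f := fun i (_ : i ≥ n) => coordSA (G := G) i) (k + n) (Nat.le_add_left n k)
    intro B hB
    exact hle _ (MeasurableSpace.measurableSet_comap.2 ⟨B, hB, rfl⟩)
  rw [htu]
  exact hshift hu

end SkewAux

/-- if `T` is in addition ergodic, the skew shift `T̄(ω,h) = (Tω, Sh)`
is ergodic with respect to `Q`. -/
theorem skewShift_ergodic {Ω : Type*} [MeasurableSpace Ω]
    (lam : Measure Ω) [IsProbabilityMeasure lam]
    (T : Ω → Ω) (hbij : Function.Bijective T) (herg : Ergodic T lam)
    {G : Type*} [Group G] [Countable G] [MeasurableSpace G] [DiscreteMeasurableSpace G]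
    (μ : Ω → PMF G) (hmeas : ∀ g : G, Measurable fun ω => μ ω g)
    (Q : Measure (Ω × (ℕ → G))) [IsProbabilityMeasure Q]
    (hQ : IsIncrementMeasure lam T μ Q) :
    Ergodic (skewShift T (G := G)) Q := by
  classical
  open SkewAux ProbabilityTheory in
  have hNe : Nonempty G := ⟨1⟩
  have hT : MeasurePreserving T lam lam := herg.toMeasurePreserving
  have hTm : Measurable T := hT.measurable
  have hmeasSkew : Measurable (skewShift T (G := G)) := by
    refine Measurable.prod (hTm.comp measurable_fst) ?_
    exact measurable_pi_lambda _ fun n => (measurable_pi_apply (n + 1)).comp measurable_snd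
  have hshiftm : Measurable (fun (h : ℕ → G) k => h (k + 1)) :=
    measurable_pi_lambda _ fun k => measurable_pi_apply (k + 1)
  -- the product of `A` and a cylinder set, as appearing in `hQ`
  have hQ' : ∀ (A : Set Ω), MeasurableSet A → ∀ (n : ℕ) (s : ℕ → G),
      Q (A ×ˢ cyl n s) = ∫⁻ ω in A, ∏ i ∈ Finset.range n, μ (T^[i] ω) (s i) ∂lam := by
    intro A hA n s
    have : A ×ˢ cyl n s = {p : Ω × (ℕ → G) | p.1 ∈ A ∧ ∀ i < n, p.2 i = s i} := rfl
    rw [this]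
    exact hQ A hA n s
  -- measurability of the product integrand
  have hFmeas : ∀ (n : ℕ) (s : ℕ → G),
      Measurable fun ω => ∏ i ∈ Finset.range n, μ (T^[i] ω) (s i) := by
    intro n s
    refine Finset.measurable_prod _ fun i _ => ?_
    exact (hmeas (s i)).comp (hTm.iterate i)
  -- Step 1 : Q is invariant under the skew shift
  have hkey : ∀ (A : Set Ω), MeasurableSet A → ∀ (n : ℕ) (s : ℕ → G),
      Q (skewShift T ⁻¹' (A ×ˢ cyl n s)) = Q (A ×ˢ cyl n s) := by
    intro A hA n s
    have hpre : skewShift T ⁻¹' (A ×ˢ cyl n s) =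
        ⋃ g : G, (T ⁻¹' A) ×ˢ cyl (n + 1) (cons g s) := by
      have h1 : skewShift T ⁻¹' (A ×ˢ cyl n s) =
          (T ⁻¹' A) ×ˢ ((fun (h : ℕ → G) k => h (k + 1)) ⁻¹' cyl n s) := rfl
      rw [h1, shift_preimage_cyl, Set.prod_iUnion]
    have hdisj : Pairwise (Function.onFun Disjoint
        fun g : G => (T ⁻¹' A) ×ˢ cyl (n + 1) (cons g s)) := by
      intro a b hab
      exact Set.disjoint_prod.2 (Or.inr (pairwise_disjoint_cons n s hab))
    rw [hpre, measure_iUnion hdisj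
      (fun g => (hTm hA).prod (measurableSet_cyl (n + 1) (cons g s)))]
    have hterm : ∀ g : G, Q ((T ⁻¹' A) ×ˢ cyl (n + 1) (cons g s)) =
        ∫⁻ ω in T ⁻¹' A,
          (∏ i ∈ Finset.range n, μ (T^[i] (T ω)) (s i)) * μ ω g ∂lam := by
      intro g
      rw [hQ' (T ⁻¹' A) (hTm hA) (n + 1) (cons g s)]
      refine setLIntegral_congr_fun (hTm hA) (fun ω _ => ?_)
      rw [Finset.prod_range_succ']
      refine congrArg₂ (· * ·) ?_ rfl
      refine Finset.prod_congr rfl fun i _ => ?_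
      rw [cons_succ, Function.iterate_succ_apply]
    rw [tsum_congr hterm, ← lintegral_tsum]
    · have hsum : ∀ ω, (∑' g : G,
          (∏ i ∈ Finset.range n, μ (T^[i] (T ω)) (s i)) * μ ω g) =
          ∏ i ∈ Finset.range n, μ (T^[i] (T ω)) (s i) := by
        intro ω
        rw [ENNReal.tsum_mul_left, (μ ω).tsum_coe, mul_one]
      calc ∫⁻ ω in T ⁻¹' A, ∑' g : G,
            (∏ i ∈ Finset.range n, μ (T^[i] (T ω)) (s i)) * μ ω g ∂lam
          = ∫⁻ ω in T ⁻¹' A, ∏ i ∈ Finset.range n, μ (T^[i] (T ω)) (s i) ∂lam := by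
            exact setLIntegral_congr_fun (hTm hA)
              (fun ω _ => hsum ω)
        _ = ∫⁻ ω in A, ∏ i ∈ Finset.range n, μ (T^[i] ω) (s i) ∂lam :=
            hT.setLIntegral_comp_preimage hA (hFmeas n s)
        _ = Q (A ×ˢ cyl n s) := (hQ' A hA n s).symm
    · exact fun g => (((hFmeas n s).comp hTm).mul (hmeas g)).aemeasurable
  -- extensionality: equality of measures on the product σ-algebra
  have hprodgen :
      MeasurableSpace.generateFrom
        (Set.image2 (· ×ˢ ·) {A : Set Ω | MeasurableSet A} (cylSet (G := G))) =
      (inferInstance : MeasurableSpace (Ω × (ℕ → G))) := by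
    have h := generateFrom_prod_eq
      (C := {A : Set Ω | MeasurableSet A}) (D := cylSet (G := G))
      ⟨fun _ => Set.univ, fun _ => MeasurableSet.univ, Set.iUnion_const _⟩
      ⟨fun _ => Set.univ, fun _ => univ_mem_cylSet, Set.iUnion_const _⟩
    rw [MeasurableSpace.generateFrom_measurableSet, generateFrom_cyl] at h
    exact h.symm
  have hmapQ : Measure.map (skewShift T (G := G)) Q = Q := by
    have : IsProbabilityMeasure (Measure.map (skewShift T (G := G)) Q) :=
      Measure.isProbabilityMeasure_map hmeasSkew.aemeasurable
    refine MeasureTheory.ext_of_generate_finite _ hprodgen.symm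
      (IsPiSystem.prod (fun A hA B hB _ => hA.inter hB) isPiSystem_cyl) ?_ (by simp)
    rintro _ ⟨A, hA, _, ⟨n, s, rfl⟩, rfl⟩
    rw [Measure.map_apply hmeasSkew (hA.prod (measurableSet_cyl n s))]
    exact hkey A hA n s
  have hmp : MeasurePreserving (skewShift T (G := G)) Q Q := ⟨hmeasSkew, hmapQ⟩
  -- Step 2 : marginal of Q is lam
  have hfst : Q.fst = lam := by
    ext A hA
    rw [Measure.fst_apply hA]
    have h0 := hQ A hA 0 (fun _ => 1)
    simp only [Nat.not_lt_zero, false_implies, implies_true, and_true,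
      Finset.range_zero, Finset.prod_empty] at h0
    have : (Prod.fst ⁻¹' A : Set (Ω × (ℕ → G))) = {p : Ω × (ℕ → G) | p.1 ∈ A} := rfl
    rw [this, h0, setLIntegral_one]
  -- Step 3 : disintegration
  set κ := Q.condKernel with hκdef
  have hdis : lam ⊗ₘ κ = Q := by
    rw [← hfst, hκdef]
    exact Q.disintegrate Q.condKernel
  -- Step 4 : a.e. cylinder formula for κ
  have hcylae : ∀ (n : ℕ) (s : ℕ → G), ∀ᵐ ω ∂lam,
      κ ω (cyl n s) = ∏ i ∈ Finset.range n, μ (T^[i] ω) (s i) := by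
    intro n s
    refine ae_eq_of_forall_setLIntegral_eq_of_sigmaFinite
      (Kernel.measurable_coe κ (measurableSet_cyl n s)) (hFmeas n s) ?_
    intro A hA _
    calc ∫⁻ ω in A, κ ω (cyl n s) ∂lam
        = (lam ⊗ₘ κ) (A ×ˢ cyl n s) :=
          (Measure.compProd_apply_prod hA (measurableSet_cyl n s)).symm
      _ = Q (A ×ˢ cyl n s) := by rw [hdis]
      _ = ∫⁻ ω in A, ∏ i ∈ Finset.range n, μ (T^[i] ω) (s i) ∂lam := hQ' A hA n s
  have hGood : ∀ᵐ ω ∂lam, ∀ (n : ℕ) (s : ℕ → G),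
      κ ω (cyl n s) = ∏ i ∈ Finset.range n, μ (T^[i] ω) (s i) := by
    have hcanon : ∀ᵐ ω ∂lam, ∀ p : Σ n : ℕ, Fin n → G,
        κ ω (cyl p.1 (fun k => if hk : k < p.1 then p.2 ⟨k, hk⟩ else 1)) =
          ∏ i ∈ Finset.range p.1,
            μ (T^[i] ω) (if hk : i < p.1 then p.2 ⟨i, hk⟩ else 1) := by
      rw [ae_all_iff]
      intro p
      exact hcylae p.1 _
    filter_upwards [hcanon] with ω hω n s
    have h1 := hω ⟨n, fun i => s i⟩
    have h2 : cyl n (fun k => if hk : k < n then s k else 1) = cyl n s :=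
      cyl_congr fun i hi => by simp [hi]
    rw [h2] at h1
    rw [h1]
    refine Finset.prod_congr rfl fun i hi => ?_
    have : i < n := Finset.mem_range.1 hi
    simp [this]
  -- a.e. composition with T
  have hcomp : ∀ {p : Ω → Prop}, (∀ᵐ ω ∂lam, p ω) → (∀ᵐ ω ∂lam, p (T ω)) := by
    intro p hp
    exact hT.quasiMeasurePreserving.ae hp
  -- now prove ergodicity
  refine ⟨hmp, ⟨?_⟩⟩
  intro s hs hinv
  rw [Filter.eventuallyConst_set']
  -- iterated invariance and the section identity
  have hskew_iter : ∀ (n : ℕ) (p : Ω × (ℕ → G)),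
      (skewShift T (G := G))^[n] p = (T^[n] p.1, fun k => p.2 (k + n)) := by
    intro n
    induction n with
    | zero => intro p; rfl
    | succ n ih =>
      intro p
      rw [Function.iterate_succ_apply', ih p, Function.iterate_succ_apply']
      show (T (T^[n] p.1), fun k => p.2 (k + 1 + n)) = (T (T^[n] p.1), fun k => p.2 (k + (n + 1)))
      congr 1
      funext k
      have hk : k + 1 + n = k + (n + 1) := by omega
      rw [hk]
  have hinv_n : ∀ n : ℕ, ((skewShift T (G := G))^[n]) ⁻¹' s = s := by
    intro n
    induction n with
    | zero => rfl
    | succ n ih =>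
      rw [Function.iterate_succ, Set.preimage_comp, ih, hinv]
  have hiter : ∀ (n : ℕ) (ω : Ω), Prod.mk ω ⁻¹' s =
      (fun (h : ℕ → G) k => h (k + n)) ⁻¹' (Prod.mk (T^[n] ω) ⁻¹' s) := by
    intro n ω
    ext h
    simp only [Set.mem_preimage]
    constructor
    · intro hh
      have h2 : (skewShift T (G := G))^[n] (ω, h) ∈ s := by
        rw [← hinv_n n] at hh
        exact hh
      rwa [hskew_iter n (ω, h)] at h2
    · intro hh
      have h2 : (skewShift T (G := G))^[n] (ω, h) ∈ s := by
        rw [hskew_iter n (ω, h)]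
        exact hh
      rw [← hinv_n n]
      exact h2
  -- the fiber measure of s
  set φ : Ω → ℝ≥0∞ := fun ω => κ ω (Prod.mk ω ⁻¹' s) with hφdef
  have hsecm : ∀ ω, MeasurableSet (Prod.mk ω ⁻¹' s) := fun ω => measurable_prodMk_left hs
  have hφmeas : Measurable φ := Kernel.measurable_kernel_prodMk_left hs
  -- fiberwise 0-1 law
  have h01 : ∀ᵐ ω ∂lam, φ ω = 0 ∨ φ ω = 1 := by
    filter_upwards [hGood] with ω hω
    exact zero_one (κ ω) (fun i g => μ (T^[i] ω) g) (fun i => (μ (T^[i] ω)).tsum_coe) hω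
      (Prod.mk ω ⁻¹' s) (fun n => ⟨Prod.mk (T^[n] ω) ⁻¹' s, hsecm _, hiter n ω⟩)
  -- invariance of φ
  have hφT : ∀ᵐ ω ∂lam, φ (T ω) = φ ω := by
    filter_upwards [hGood, hcomp hGood] with ω h1 h2
    have hmapshift : (κ ω).map (fun (h : ℕ → G) k => h (k + 1)) = κ (T ω) := by
      haveI : IsProbabilityMeasure ((κ ω).map (fun (h : ℕ → G) k => h (k + 1))) :=
        Measure.isProbabilityMeasure_map hshiftm.aemeasurable
      refine ext_cyl _ _ fun n t => ?_
      rw [Measure.map_apply hshiftm (measurableSet_cyl n t), shift_preimage_cyl,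
        measure_iUnion (pairwise_disjoint_cons n t) (fun g => measurableSet_cyl _ _)]
      have hterm : ∀ g : G, κ ω (cyl (n + 1) (cons g t)) =
          (∏ i ∈ Finset.range n, μ (T^[i] (T ω)) (t i)) * μ ω g := by
        intro g
        rw [h1 (n + 1) (cons g t), Finset.prod_range_succ']
        refine congrArg₂ (· * ·) ?_ rfl
        refine Finset.prod_congr rfl fun i _ => ?_
        rw [cons_succ, Function.iterate_succ_apply]
      rw [tsum_congr hterm, ENNReal.tsum_mul_left, (μ ω).tsum_coe, mul_one, h2 n t]
    have h3 := hiter 1 ω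
    rw [Function.iterate_one] at h3
    calc φ (T ω) = κ (T ω) (Prod.mk (T ω) ⁻¹' s) := rfl
      _ = (κ ω).map (fun (h : ℕ → G) k => h (k + 1)) (Prod.mk (T ω) ⁻¹' s) := by
          rw [hmapshift]
      _ = κ ω ((fun (h : ℕ → G) k => h (k + 1)) ⁻¹' (Prod.mk (T ω) ⁻¹' s)) :=
          Measure.map_apply hshiftm (hsecm _)
      _ = κ ω (Prod.mk ω ⁻¹' s) := (congrArg (κ ω) h3.symm)
      _ = φ ω := rfl
  have hQs : Q s = ∫⁻ ω, φ ω ∂lam := by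
    rw [← hdis, Measure.compProd_apply hs]
  -- the set where φ = 1
  set B : Set Ω := φ ⁻¹' {1} with hBdef
  have hBmeas : MeasurableSet B := hφmeas (measurableSet_singleton 1)
  have hBinv : T ⁻¹' B =ᵐ[lam] B := by
    rw [Filter.eventuallyEq_set]
    filter_upwards [hφT] with ω hω
    simp only [hBdef, Set.mem_preimage, Set.mem_singleton_iff]
    rw [hω]
  have hQB : Q s = lam B := by
    have hφB : ∀ᵐ ω ∂lam, φ ω = B.indicator 1 ω := by
      filter_upwards [h01] with ω hω
      rcases hω with h | h
      · rw [h, Set.indicator_of_notMem]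
        intro hmem
        rw [hBdef] at hmem
        simp only [Set.mem_preimage, Set.mem_singleton_iff] at hmem
        rw [h] at hmem
        exact zero_ne_one hmem
      · rw [h, Set.indicator_of_mem]
        · rfl
        · rw [hBdef]
          simpa using h
    rw [hQs, lintegral_congr_ae hφB, lintegral_indicator_one hBmeas]
  rcases herg.quasiErgodic.ae_empty_or_univ₀ hBmeas.nullMeasurableSet hBinv with hB0 | hB1
  · left
    refine ae_eq_empty.2 ?_
    rw [hQB]
    exact ae_eq_empty.1 hB0
  · right
    refine ae_eq_univ.2 ?_
    refine (prob_compl_eq_zero_iff hs).2 ?_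
    rw [hQB]
    calc lam B = lam Set.univ := measure_congr hB1
      _ = 1 := measure_univ
end

section
/- Let G be a countable group with a subadditive length function |·| (|gh| ≤ |g|+|h|, |e|=0) such that the growth rate v = limsup_{t→∞} (1/t) log card{g : |g| ≤ t} is finite. Then there is a constant C such that for every probability measure θ on G with finite first moment |θ| = ∑ θ(g)|g|, the entropy satisfies H(θ) ≤ C(|θ| + 1). -/
open scoped ENNReal
open Filter Topology MeasureTheory

/-- First moment `|θ| = ∑_g θ(g) ℓ(g)` of a measure with respect to a length
function `ℓ`, valued in `[0,∞]`. -/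
noncomputable def pmfMoment {G : Type*} (ℓ : G → ℝ) (θ : PMF G) : ℝ≥0∞ :=
  ∑' g, θ g * ENNReal.ofReal (ℓ g)

/-!
Gibbs' inequality against the weights `e^{-a|g|}` gives `H(θ) ≤ Z(a) + a |θ|` with
`Z(a) = ∑_g e^{-a|g|}`. Sorting `g` by `⌈|g|⌉` bounds `Z(a)` by `e^a ∑_n #{|g| ≤ n} e^{-an}`,
which converges once `a` exceeds the growth rate `v`. So `C = a + Z(a)` works for any `a > max v 0`.
-/

open Real

lemma Real.negMulLog_le_sub_mul_log {x w : ℝ} (hx : 0 ≤ x) (hw : 0 < w) :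
    negMulLog x ≤ w - x * log w := by
  have hsplit : negMulLog x = w * negMulLog (x / w) - x * log w := by
    conv_lhs => rw [← mul_div_cancel₀ x hw.ne']
    rw [negMulLog_mul, negMulLog]
    field_simp
    ring
  have hxw : 0 ≤ x / w := div_nonneg hx hw.le
  rw [hsplit, sub_le_sub_iff_right]
  calc w * negMulLog (x / w) ≤ w * (1 - x / w) := by
        gcongr
        exact negMulLog_le_one_sub_self hxw
    _ ≤ w := mul_le_of_le_one_right hw.le (by linarith)

lemma pmfEntropy_le_tsum_exp_add_mul_pmfMoment {α : Type*} (θ : PMF α) (ℓ : α → ℝ)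
    {a : ℝ} (ha : 0 ≤ a) :
    pmfEntropy θ ≤ ∑' g, ENNReal.ofReal (exp (-(a * ℓ g))) + ENNReal.ofReal a * pmfMoment ℓ θ := by
  rw [pmfMoment, ← ENNReal.tsum_mul_left, ← ENNReal.tsum_add]
  refine ENNReal.tsum_le_tsum fun g => ?_
  have hgibbs := negMulLog_le_sub_mul_log (x := (θ g).toReal) ENNReal.toReal_nonneg
    (exp_pos (-(a * ℓ g)))
  rw [log_exp] at hgibbs
  calc ENNReal.ofReal (negMulLog (θ g).toReal)
      ≤ ENNReal.ofReal (exp (-(a * ℓ g)) + (θ g).toReal * (a * ℓ g)) :=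
        ENNReal.ofReal_le_ofReal (by linarith)
    _ ≤ ENNReal.ofReal (exp (-(a * ℓ g))) + ENNReal.ofReal ((θ g).toReal * (a * ℓ g)) :=
        ENNReal.ofReal_add_le
    _ = ENNReal.ofReal (exp (-(a * ℓ g))) + ENNReal.ofReal a * (θ g * ENNReal.ofReal (ℓ g)) := by
        rw [ENNReal.ofReal_mul ENNReal.toReal_nonneg, ENNReal.ofReal_toReal (θ.apply_ne_top g),
          ENNReal.ofReal_mul ha]
        ring

lemma tsum_exp_neg_mul_le_tsum_encard_sublevel {α : Type*} (ℓ : α → ℝ) (hnn : ∀ g, 0 ≤ ℓ g)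
    {a : ℝ} (ha : 0 ≤ a) :
    ∑' g, ENNReal.ofReal (exp (-(a * ℓ g))) ≤
      ∑' n : ℕ, {g | ℓ g ≤ n}.encard * ENNReal.ofReal (exp (a - a * n)) := by
  rw [← ENNReal.tsum_fiberwise _ fun g => ⌈ℓ g⌉₊]
  refine ENNReal.tsum_le_tsum fun n => ?_
  have hfiber : (fun g => ⌈ℓ g⌉₊) ⁻¹' {n} ⊆ {g | ℓ g ≤ n} := by
    rintro g rfl
    exact Nat.le_ceil (ℓ g)
  calc ∑' g : (fun g => ⌈ℓ g⌉₊) ⁻¹' {n}, ENNReal.ofReal (exp (-(a * ℓ g)))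
      ≤ ∑' _ : (fun g => ⌈ℓ g⌉₊) ⁻¹' {n}, ENNReal.ofReal (exp (a - a * n)) := by
        refine ENNReal.tsum_le_tsum fun ⟨g, hg⟩ => ?_
        have hceil : (n : ℝ) < ℓ g + 1 := hg ▸ Nat.ceil_lt_add_one (hnn g)
        gcongr
        nlinarith
    _ ≤ {g | ℓ g ≤ n}.encard * ENNReal.ofReal (exp (a - a * n)) := by
        rw [ENNReal.tsum_set_const]
        gcongr

lemma summable_mul_exp_of_log_le {N : ℕ → ℝ} {v a : ℝ} (hN : ∀ n, 0 ≤ N n)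
    (hgrowth : ∀ᶠ n : ℕ in atTop, log (N n) ≤ v * n) (hva : v < a) (b : ℝ) :
    Summable fun n => N n * exp (b - a * n) := by
  have hgeom : Summable fun n : ℕ => exp b * exp (n * (v - a)) :=
    (summable_exp_nat_mul_iff.2 (sub_neg.2 hva)).mul_left _
  refine hgeom.of_norm_bounded_eventually_nat ?_
  filter_upwards [hgrowth] with n hn
  rw [Real.norm_of_nonneg (mul_nonneg (hN n) (exp_pos _).le), ← exp_add]
  calc N n * exp (b - a * n) ≤ exp (v * n) * exp (b - a * n) := by
        gcongr
        exact le_exp_of_log_le hn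
    _ = exp (b + n * (v - a)) := by rw [← exp_add]; ring_nf

lemma tsum_exp_neg_mul_ne_top {α : Type*} (ℓ : α → ℝ) (hnn : ∀ g, 0 ≤ ℓ g)
    (hfin : ∀ t : ℝ, {g | ℓ g ≤ t}.Finite) {v a : ℝ}
    (hgrowth : ∀ᶠ t : ℝ in atTop, log (Nat.card {g | ℓ g ≤ t}) ≤ v * t)
    (hva : v < a) (ha : 0 ≤ a) :
    ∑' g, ENNReal.ofReal (exp (-(a * ℓ g))) ≠ ⊤ := by
  have hsummable := summable_mul_exp_of_log_le (fun _ => Nat.cast_nonneg _)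
    (tendsto_natCast_atTop_atTop.eventually hgrowth) hva a
  have hterm : ∀ n : ℕ, {g | ℓ g ≤ n}.encard * ENNReal.ofReal (exp (a - a * n)) =
      ENNReal.ofReal (Nat.card {g | ℓ g ≤ (n : ℝ)} * exp (a - a * n)) := by
    intro n
    rw [ENNReal.ofReal_mul (Nat.cast_nonneg _), ENNReal.ofReal_natCast, Nat.card_coe_set_eq,
      ← (hfin n).cast_ncard_eq]
    norm_cast
  refine ne_top_of_le_ne_top ?_ (tsum_exp_neg_mul_le_tsum_encard_sublevel ℓ hnn ha)
  rw [tsum_congr hterm, ← ENNReal.ofReal_tsum_of_nonneg (fun _ => by positivity) hsummable]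
  exact ENNReal.ofReal_ne_top

theorem entropy_le_moment_bound_general {G : Type*}
    (ℓ : G → ℝ) (hnn : ∀ g, 0 ≤ ℓ g)
    (hfin : ∀ t : ℝ, {g : G | ℓ g ≤ t}.Finite)
    (hgrowth : ∃ v : ℝ, ∀ᶠ t : ℝ in atTop,
      Real.log (Nat.card {g : G | ℓ g ≤ t}) ≤ v * t) :
    ∃ C : ℝ, 0 < C ∧ ∀ θ : PMF G, pmfMoment ℓ θ ≠ ⊤ →
      pmfEntropy θ ≤ ENNReal.ofReal (C * ((pmfMoment ℓ θ).toReal + 1)) := by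
  obtain ⟨v, hv⟩ := hgrowth
  set a := max v 0 + 1
  have ha : 0 < a := by positivity
  set Z := ∑' g, ENNReal.ofReal (exp (-(a * ℓ g)))
  have hZ : Z ≠ ⊤ :=
    tsum_exp_neg_mul_ne_top ℓ hnn hfin hv (by linarith [le_max_left v 0]) ha.le
  refine ⟨a + Z.toReal, by positivity, fun θ hM => ?_⟩
  calc pmfEntropy θ ≤ Z + ENNReal.ofReal a * pmfMoment ℓ θ :=
        pmfEntropy_le_tsum_exp_add_mul_pmfMoment θ ℓ ha.le
    _ = ENNReal.ofReal (Z.toReal + a * (pmfMoment ℓ θ).toReal) := by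
        rw [ENNReal.ofReal_add ENNReal.toReal_nonneg (by positivity), ENNReal.ofReal_toReal hZ,
          ENNReal.ofReal_mul ha.le, ENNReal.ofReal_toReal hM]
    _ ≤ ENNReal.ofReal ((a + Z.toReal) * ((pmfMoment ℓ θ).toReal + 1)) := by
        gcongr
        nlinarith [ENNReal.toReal_nonneg (a := Z), ENNReal.toReal_nonneg (a := pmfMoment ℓ θ)]

/-- Derriennic's lemma: if a subadditive length function on `G` has
finite exponential growth rate, then there is `C` with `H(θ) ≤ C(|θ| + 1)` for every
probability measure `θ` with finite first moment. -/
theorem entropy_le_moment_bound {G : Type*} [Group G] [Countable G]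
    (ℓ : G → ℝ) (hnn : ∀ g, 0 ≤ ℓ g) (hone : ℓ 1 = 0)
    (hsub : ∀ g h : G, ℓ (g * h) ≤ ℓ g + ℓ h)
    (hfin : ∀ t : ℝ, {g : G | ℓ g ≤ t}.Finite)
    (hgrowth : ∃ v : ℝ, ∀ᶠ t : ℝ in atTop,
      Real.log (Nat.card {g : G | ℓ g ≤ t}) ≤ v * t) :
    ∃ C : ℝ, 0 < C ∧ ∀ θ : PMF G, pmfMoment ℓ θ ≠ ⊤ →
      pmfEntropy θ ≤ ENNReal.ofReal (C * ((pmfMoment ℓ θ).toReal + 1)) :=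
  entropy_le_moment_bound_general ℓ hnn hfin hgrowth
end

section
/- Let G be a countable group with a length function |·| satisfying |gh| ≤ |g|+|h|, and suppose the growth v = limsup (1/t) log card{g: |g| ≤ t} is finite. Let μ_0, μ_1, ... be probability measures with uniformly integrable first moments such that the rate of escape l = lim (1/n)∑_g (μ_0*⋯*μ_{n-1})(g)|g| and the asymptotic entropy h̄ = lim H(μ_0*⋯*μ_{n-1})/n both exist. Then h̄ ≤ l·v. -/
open scoped ENNReal
open Filter Topology MeasureTheory

/-! Gibbs' inequality `-p log p ≤ p c + e^{-c} - p`, applied with `c = s ℓ(g)` and summed over `g`,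
bounds the entropy of any measure `θ` by `s |θ| + Z(s)`, where `Z(s) = ∑_g e^{-s ℓ(g)}` is the
Poincaré series of the length function. Counting `g` by the integer part of `ℓ(g)` shows that
`Z(s) < ∞` for every `s > v`. Dividing `H(θ_n) ≤ s |θ_n| + Z(s)` by `n` gives `h̄ ≤ s l` for all
`s > v`, and letting `s ↓ v` gives `h̄ ≤ l v`. -/

namespace Real

theorem negMulLog_add_le_mul_add_exp_neg {p : ℝ} (hp : 0 ≤ p) (c : ℝ) :
    negMulLog p + p ≤ p * c + exp (-c) := by
  rcases hp.eq_or_lt with rfl | hp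
  · simp [(exp_pos _).le]
  -- `exp (-c) = p * exp x` with `x = -c - log p`, and `exp x ≥ 1 + x`.
  have h := mul_le_mul_of_nonneg_left (add_one_le_exp (-c - log p)) hp.le
  rw [exp_sub, exp_log hp, mul_div_cancel₀ _ hp.ne'] at h
  simp only [negMulLog]
  linarith

end Real

section LengthFunction

variable {α : Type*} (ℓ : α → ℝ)

noncomputable def poincareSeries (s : ℝ) : ℝ≥0∞ :=
  ∑' a, ENNReal.ofReal (Real.exp (-(s * ℓ a)))

variable {ℓ}

theorem pmfEntropy_le (hnn : ∀ a, 0 ≤ ℓ a) (θ : PMF α) {s : ℝ} (hs : 0 ≤ s) :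
    pmfEntropy θ ≤ ENNReal.ofReal s * pmfMoment ℓ θ + poincareSeries ℓ s := by
  have hterm : ∀ a, ENNReal.ofReal (Real.negMulLog (θ a).toReal) ≤
      ENNReal.ofReal s * (θ a * ENNReal.ofReal (ℓ a)) +
        ENNReal.ofReal (Real.exp (-(s * ℓ a))) := by
    intro a
    have hp := ENNReal.toReal_nonneg (a := θ a)
    conv_rhs => rw [← ENNReal.ofReal_toReal (θ.apply_ne_top a), ← ENNReal.ofReal_mul hp,
      ← ENNReal.ofReal_mul hs, ← ENNReal.ofReal_add (by have := hnn a; positivity) (by positivity)]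
    refine ENNReal.ofReal_le_ofReal ?_
    have := Real.negMulLog_add_le_mul_add_exp_neg hp (s * ℓ a)
    linarith
  calc pmfEntropy θ ≤ ∑' a, (ENNReal.ofReal s * (θ a * ENNReal.ofReal (ℓ a)) +
        ENNReal.ofReal (Real.exp (-(s * ℓ a)))) := ENNReal.tsum_le_tsum hterm
    _ = _ := by rw [ENNReal.tsum_add, ENNReal.tsum_mul_left, pmfMoment, poincareSeries]

theorem pmfEntropy_toReal_le (hnn : ∀ a, 0 ≤ ℓ a) (θ : PMF α) {s : ℝ} (hs : 0 ≤ s)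
    (hθ : pmfMoment ℓ θ ≠ ⊤) (hZ : poincareSeries ℓ s ≠ ⊤) :
    (pmfEntropy θ).toReal ≤ s * (pmfMoment ℓ θ).toReal + (poincareSeries ℓ s).toReal := by
  have hfin : ENNReal.ofReal s * pmfMoment ℓ θ ≠ ⊤ := ENNReal.mul_ne_top ENNReal.ofReal_ne_top hθ
  have := ENNReal.toReal_mono (ENNReal.add_ne_top.mpr ⟨hfin, hZ⟩) (pmfEntropy_le hnn θ hs)
  rwa [ENNReal.toReal_add hfin hZ, ENNReal.toReal_mul, ENNReal.toReal_ofReal hs] at this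

theorem poincareSeries_le_tsum_encard_mul (hnn : ∀ a, 0 ≤ ℓ a) {s : ℝ} (hs : 0 ≤ s) :
    poincareSeries ℓ s ≤ ∑' k : ℕ,
      {a | ℓ a ≤ k}.encard * ENNReal.ofReal (Real.exp (-(s * (k - 1)))) := by
  -- Split `α` into the shells `⌈ℓ a⌉₊ = k`, on which `k - 1 ≤ ℓ a ≤ k`.
  rw [poincareSeries, ← ENNReal.tsum_fiberwise _ fun a => ⌈ℓ a⌉₊]
  refine ENNReal.tsum_le_tsum fun k => ?_
  have hshell : (fun a => ⌈ℓ a⌉₊) ⁻¹' {k} ⊆ {a | ℓ a ≤ k} := fun a ha =>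
    Nat.ceil_le.mp (le_of_eq ha)
  calc _ ≤ ∑' a : (fun a => ⌈ℓ a⌉₊) ⁻¹' {k}, ENNReal.ofReal (Real.exp (-(s * (k - 1)))) := by
        refine ENNReal.tsum_le_tsum fun a => ENNReal.ofReal_le_ofReal ?_
        have : (k : ℝ) - 1 ≤ ℓ a := by
          have h := Nat.ceil_lt_add_one (hnn a)
          rw [show ⌈ℓ a⌉₊ = k from a.2] at h
          linarith
        gcongr
    _ ≤ _ := by
        rw [ENNReal.tsum_set_const]
        gcongr

theorem poincareSeries_ne_top (hnn : ∀ a, 0 ≤ ℓ a) (hfin : ∀ t : ℝ, {a | ℓ a ≤ t}.Finite)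
    {κ s : ℝ} (hs : 0 ≤ s) (hκs : κ < s)
    (hgrowth : ∀ᶠ t : ℝ in atTop, (Nat.card {a | ℓ a ≤ t} : ℝ) ≤ Real.exp (κ * t)) :
    poincareSeries ℓ s ≠ ⊤ := by
  set c : ℕ → ℝ := fun k => Nat.card {a | ℓ a ≤ k} * Real.exp (-(s * (k - 1)))
  have hc : ∀ k : ℕ, {a | ℓ a ≤ k}.encard * ENNReal.ofReal (Real.exp (-(s * (k - 1)))) =
      ENNReal.ofReal (c k) := fun k => by
    rw [← (hfin k).cast_ncard_eq, ← Nat.card_coe_set_eq, ENNReal.ofReal_mul (by positivity),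
      ENNReal.ofReal_natCast]
    rfl
  have hc_summable : Summable c := by
    refine (summable_geometric_of_lt_one (Real.exp_nonneg (κ - s))
      (Real.exp_lt_one_iff.mpr (by linarith))).mul_left (Real.exp s)
      |>.of_norm_bounded_eventually_nat ?_
    filter_upwards [tendsto_natCast_atTop_atTop.eventually hgrowth] with k hk
    rw [Real.norm_of_nonneg (by positivity), ← Real.exp_nat_mul, ← Real.exp_add]
    calc c k ≤ Real.exp (κ * k) * Real.exp (-(s * (k - 1))) :=
          mul_le_mul_of_nonneg_right hk (Real.exp_nonneg _)
      _ = _ := by rw [← Real.exp_add]; ring_nf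
  refine ne_top_of_le_ne_top ?_ (poincareSeries_le_tsum_encard_mul hnn hs)
  rw [tsum_congr hc, ← ENNReal.ofReal_tsum_of_nonneg (fun k => by positivity) hc_summable]
  exact ENNReal.ofReal_ne_top

theorem nonneg_of_card_le_exp [Nonempty α] (hfin : ∀ t : ℝ, {a | ℓ a ≤ t}.Finite) {v : ℝ}
    (hgrowth : ∀ ε > (0 : ℝ), ∀ᶠ t : ℝ in atTop,
      (Nat.card {a | ℓ a ≤ t} : ℝ) ≤ Real.exp ((v + ε) * t)) :
    0 ≤ v := by
  obtain ⟨a⟩ := ‹Nonempty α›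
  refine le_of_forall_sub_le fun ε hε => ?_
  obtain ⟨t, hcard, ht, hat⟩ :=
    ((hgrowth ε hε).and ((eventually_gt_atTop 0).and (eventually_ge_atTop (ℓ a)))).exists
  have : Nonempty {a | ℓ a ≤ t} := ⟨⟨a, hat⟩⟩
  have : Finite {a | ℓ a ≤ t} := hfin t
  have hone : (1 : ℝ) ≤ Real.exp ((v + ε) * t) :=
    le_trans (by exact_mod_cast Nat.card_pos) hcard
  have := nonneg_of_mul_nonneg_left (Real.one_le_exp_iff.mp hone) ht
  linarith

end LengthFunction

theorem le_mul_of_forall_le_mul_add {H M : ℕ → ℝ} {a C h m : ℝ}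
    (hHM : ∀ n, H n ≤ a * M n + C) (hH : Tendsto (fun n => H n / n) atTop (𝓝 h))
    (hM : Tendsto (fun n => M n / n) atTop (𝓝 m)) :
    h ≤ a * m := by
  have hlim : Tendsto (fun n : ℕ => a * (M n / n) + C / n) atTop (𝓝 (a * m)) := by
    simpa using (hM.const_mul a).add (tendsto_const_div_atTop_nhds_zero_nat C)
  refine le_of_tendsto_of_tendsto hH hlim (eventually_gt_atTop 0 |>.mono fun n hn => ?_)
  dsimp only
  rw [mul_div_assoc', ← add_div, div_le_div_iff_of_pos_right (by positivity)]
  exact hHM n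

theorem entropy_le_speed_mul_growth_general {G : Type*} [Group G]
    (ℓ : G → ℝ) (hnn : ∀ g, 0 ≤ ℓ g)
    (hfin : ∀ t : ℝ, {g : G | ℓ g ≤ t}.Finite)
    (v : ℝ)
    (hv : ∀ ε > (0 : ℝ), ∀ᶠ t : ℝ in atTop,
      (Nat.card {g : G | ℓ g ≤ t} : ℝ) ≤ Real.exp ((v + ε) * t))
    (μs : ℕ → PMF G) (hmom : ∀ n, pmfMoment ℓ (convPrefix μs n) ≠ ⊤)
    (l : ℝ)
    (hl : Tendsto (fun n : ℕ => (pmfMoment ℓ (convPrefix μs n)).toReal / n)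
      atTop (𝓝 l))
    (hbar : ℝ)
    (hh : Tendsto (fun n : ℕ => (pmfEntropy (convPrefix μs n)).toReal / n)
      atTop (𝓝 hbar)) :
    hbar ≤ l * v := by
  have hv0 : 0 ≤ v := nonneg_of_card_le_exp hfin hv
  have hbound : ∀ s > v, hbar ≤ s * l := fun s hvs => by
    obtain ⟨κ, hvκ, hκs⟩ := exists_between hvs
    have hs : 0 ≤ s := hv0.trans hvs.le
    have hZ : poincareSeries ℓ s ≠ ⊤ :=
      poincareSeries_ne_top hnn hfin hs hκs (by simpa using hv (κ - v) (by linarith))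
    exact le_mul_of_forall_le_mul_add
      (fun n => pmfEntropy_toReal_le hnn (convPrefix μs n) hs (hmom n) hZ) hh hl
  have hlim : Tendsto (fun s => s * l) (𝓝[>] v) (𝓝 (v * l)) :=
    ((continuous_mul_const l).tendsto v).mono_left nhdsWithin_le_nhds
  rw [mul_comm]
  exact ge_of_tendsto hlim (eventually_nhdsWithin_of_forall hbound)

/-- entropy–speed–growth inequality `h̄ ≤ l·v`: for a subadditive length
function with exponential growth rate at most `v`, if the rate of escape `l` and the
asymptotic entropy `h̄` of the sequence of convolutions exist, then `h̄ ≤ l·v`. -/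
theorem entropy_le_speed_mul_growth {G : Type*} [Group G] [Countable G]
    (ℓ : G → ℝ) (hnn : ∀ g, 0 ≤ ℓ g) (hone : ℓ 1 = 0)
    (hsub : ∀ g h : G, ℓ (g * h) ≤ ℓ g + ℓ h)
    (hfin : ∀ t : ℝ, {g : G | ℓ g ≤ t}.Finite)
    (v : ℝ)
    (hv : ∀ ε > (0 : ℝ), ∀ᶠ t : ℝ in atTop,
      (Nat.card {g : G | ℓ g ≤ t} : ℝ) ≤ Real.exp ((v + ε) * t))
    (μs : ℕ → PMF G) (hmom : ∀ n, pmfMoment ℓ (convPrefix μs n) ≠ ⊤)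
    (l : ℝ)
    (hl : Tendsto (fun n : ℕ => (pmfMoment ℓ (convPrefix μs n)).toReal / n)
      atTop (𝓝 l))
    (hbar : ℝ)
    (hh : Tendsto (fun n : ℕ => (pmfEntropy (convPrefix μs n)).toReal / n)
      atTop (𝓝 hbar)) :
    hbar ≤ l * v :=
  entropy_le_speed_mul_growth_general ℓ hnn hfin v hv μs hmom l hl hbar hh
end

section
/- Let G be a countable group acting isometrically on a metric space X with subexponential growth, i.e., v(G,X) = limsup_{t→∞} (1/t) log card{g ∈ G : d(o,go) ≤ t} = 0. Then for any sequence of probability measures μ_0, μ_1, ... on G whose convolutions μ_0*⋯*μ_{n-1} have first moments growing at most linearly (∑_g (μ_0*⋯*μ_{n-1})(g)|g| ≤ Cn for some C), the asymptotic entropy lim sup_n H(μ_0*⋯*μ_{n-1})/n equals 0. -/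
open scoped ENNReal
open Filter Topology MeasureTheory

private lemma gibbs_aux (p q : ℝ) (hp : 0 ≤ p) (hq : 0 < q) :
    Real.negMulLog p ≤ p * (-Real.log q) + q := by
  rcases eq_or_lt_of_le hp with h | hp
  · simp [← h, Real.negMulLog, hq.le]
  · have h1 : Real.log (q / p) ≤ q / p - 1 := Real.log_le_sub_one_of_pos (div_pos hq hp)
    rw [Real.log_div hq.ne' hp.ne'] at h1
    have h2 : p * (Real.log q - Real.log p) ≤ p * (q / p - 1) :=
      mul_le_mul_of_nonneg_left h1 hp.le
    have h3 : p * (q / p - 1) = q - p := by field_simp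
    rw [Real.negMulLog]
    nlinarith

private lemma entropy_le_lin {G : Type*} (ℓ : G → ℝ) (θ : PMF G) {l : ℝ} (hl : 0 < l) :
    pmfEntropy θ ≤ ENNReal.ofReal l * pmfMoment ℓ θ
      + ∑' g : G, ENNReal.ofReal (Real.exp (-(l * ℓ g))) := by
  rw [pmfEntropy, pmfMoment, ← ENNReal.tsum_mul_left, ← ENNReal.tsum_add]
  refine ENNReal.tsum_le_tsum fun g => ?_
  have hp : (0:ℝ) ≤ (θ g).toReal := ENNReal.toReal_nonneg
  have h := gibbs_aux (θ g).toReal (Real.exp (-(l * ℓ g))) hp (Real.exp_pos _)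
  rw [Real.log_exp, neg_neg] at h
  calc ENNReal.ofReal (Real.negMulLog (θ g).toReal)
      ≤ ENNReal.ofReal ((θ g).toReal * (l * ℓ g) + Real.exp (-(l * ℓ g))) :=
        ENNReal.ofReal_le_ofReal h
    _ ≤ ENNReal.ofReal ((θ g).toReal * (l * ℓ g))
          + ENNReal.ofReal (Real.exp (-(l * ℓ g))) := ENNReal.ofReal_add_le
    _ = ENNReal.ofReal l * (θ g * ENNReal.ofReal (ℓ g))
          + ENNReal.ofReal (Real.exp (-(l * ℓ g))) := by
        rw [ENNReal.ofReal_mul hp, ENNReal.ofReal_mul hl.le,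
          ENNReal.ofReal_toReal (PMF.apply_ne_top θ g)]
        ring

private lemma tsum_exp_neg_lt_top {G : Type*} (ℓ : G → ℝ) (hℓ : ∀ g, 0 ≤ ℓ g)
    (hfin : ∀ t : ℝ, {g : G | ℓ g ≤ t}.Finite) {l : ℝ} (hl : 0 < l)
    (hsub : ∀ᶠ t : ℝ in atTop, (Nat.card {g : G | ℓ g ≤ t} : ℝ) ≤ Real.exp (l / 2 * t)) :
    ∑' g : G, ENNReal.ofReal (Real.exp (-(l * ℓ g))) < ⊤ := by
  obtain ⟨T, hT⟩ := eventually_atTop.1 hsub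
  set K : ℕ := ⌈T⌉₊ + 1 with hK
  set r : ℝ≥0∞ := ENNReal.ofReal (Real.exp (-(l / 2))) with hr
  set c : ℝ≥0∞ := ENNReal.ofReal (Real.exp l) with hc
  set N : ℕ → ℕ := fun k => Nat.card {g : G | ℓ g ≤ (k : ℝ)} with hN
  have hfibsub : ∀ k : ℕ, {g : G | ⌈ℓ g⌉₊ = k} ⊆ {g : G | ℓ g ≤ (k : ℝ)} := by
    intro k g hg
    have h1 : (ℓ g) ≤ (⌈ℓ g⌉₊ : ℝ) := Nat.le_ceil _
    have h2 : ⌈ℓ g⌉₊ = k := hg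
    simp only [Set.mem_setOf_eq]
    rw [← h2]
    exact h1
  have hfibfin : ∀ k : ℕ, {g : G | ⌈ℓ g⌉₊ = k}.Finite :=
    fun k => (hfin k).subset (hfibsub k)
  have key : ∑' g : G, ENNReal.ofReal (Real.exp (-(l * ℓ g)))
      = ∑' k : ℕ, ∑' x : {g : G // ⌈ℓ g⌉₊ = k}, ENNReal.ofReal (Real.exp (-(l * ℓ (x : G)))) := by
    rw [← (Equiv.sigmaFiberEquiv (fun g : G => ⌈ℓ g⌉₊)).tsum_eq, ENNReal.tsum_sigma']
    rfl
  rw [key]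
  have hTle : ∀ (k : ℕ) (u : ℝ),
      (∀ x : {g : G // ⌈ℓ g⌉₊ = k}, Real.exp (-(l * ℓ (x : G))) ≤ u) →
      ∑' x : {g : G // ⌈ℓ g⌉₊ = k}, ENNReal.ofReal (Real.exp (-(l * ℓ (x : G))))
        ≤ (N k : ℝ≥0∞) * ENNReal.ofReal u := by
    intro k u hu
    haveI : Fintype {g : G // ⌈ℓ g⌉₊ = k} := (hfibfin k).fintype
    calc ∑' x : {g : G // ⌈ℓ g⌉₊ = k}, ENNReal.ofReal (Real.exp (-(l * ℓ (x : G))))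
        ≤ ∑' _ : {g : G // ⌈ℓ g⌉₊ = k}, ENNReal.ofReal u :=
          ENNReal.tsum_le_tsum fun x => ENNReal.ofReal_le_ofReal (hu x)
      _ = (Fintype.card {g : G // ⌈ℓ g⌉₊ = k} : ℝ≥0∞) * ENNReal.ofReal u := by
          rw [tsum_fintype]
          simp [Finset.sum_const, nsmul_eq_mul]
      _ ≤ (N k : ℝ≥0∞) * ENNReal.ofReal u := by
          gcongr
          have h1 : Nat.card {g : G // ⌈ℓ g⌉₊ = k} ≤ N k :=
            Nat.card_mono (hfin k) (hfibsub k)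
          rw [Nat.card_eq_fintype_card] at h1
          exact_mod_cast h1
  set D : ℕ → ℝ≥0∞ := fun k => (if k < K then (N k : ℝ≥0∞) else 0) + c * r ^ k with hD
  have hbound : ∀ k : ℕ,
      ∑' x : {g : G // ⌈ℓ g⌉₊ = k}, ENNReal.ofReal (Real.exp (-(l * ℓ (x : G)))) ≤ D k := by
    intro k
    rcases lt_or_ge k K with hk | hk
    · have h1 := hTle k 1 (fun x => by
        rw [← Real.exp_zero]
        exact Real.exp_le_exp.2 (by nlinarith [hℓ (x : G), mul_nonneg hl.le (hℓ (x : G))]))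
      rw [ENNReal.ofReal_one, mul_one] at h1
      refine h1.trans ?_
      rw [hD]
      simp only [if_pos hk]
      exact le_add_of_nonneg_right bot_le
    · have hterm : ∀ x : {g : G // ⌈ℓ g⌉₊ = k},
          Real.exp (-(l * ℓ (x : G))) ≤ Real.exp (-(l * ((k : ℝ) - 1))) := by
        intro x
        have h2 : (k : ℝ) < ℓ (x : G) + 1 := by
          have := Nat.ceil_lt_add_one (hℓ (x : G))
          rw [x.2] at this
          exact this
        exact Real.exp_le_exp.2 (by nlinarith)
      have h1 := hTle k _ hterm
      refine h1.trans ?_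
      have hNk : (N k : ℝ) ≤ Real.exp (l / 2 * k) := by
        refine hT k ?_
        have h3 : T ≤ (⌈T⌉₊ : ℝ) := Nat.le_ceil _
        have h4 : (⌈T⌉₊ : ℝ) ≤ (k : ℝ) := by
          exact_mod_cast le_trans (Nat.le_succ _) hk
        linarith
      have h5 : (N k : ℝ≥0∞) ≤ ENNReal.ofReal (Real.exp (l / 2 * k)) := by
        rw [← ENNReal.ofReal_natCast]
        exact ENNReal.ofReal_le_ofReal hNk
      calc (N k : ℝ≥0∞) * ENNReal.ofReal (Real.exp (-(l * ((k : ℝ) - 1))))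
          ≤ ENNReal.ofReal (Real.exp (l / 2 * k))
              * ENNReal.ofReal (Real.exp (-(l * ((k : ℝ) - 1)))) := by gcongr
        _ = c * r ^ k := by
            rw [hc, hr, ← ENNReal.ofReal_mul (Real.exp_pos _).le, ← Real.exp_add,
              ← ENNReal.ofReal_pow (Real.exp_pos _).le, ← Real.exp_nat_mul,
              ← ENNReal.ofReal_mul (Real.exp_pos _).le, ← Real.exp_add]
            congr 1
            ring
        _ ≤ D k := by
            rw [hD]
            exact le_add_of_nonneg_left bot_le
  refine lt_of_le_of_lt (ENNReal.tsum_le_tsum hbound) ?_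
  rw [hD, ENNReal.tsum_add]
  have hpart1 : ∑' k : ℕ, (if k < K then (N k : ℝ≥0∞) else 0)
      = ∑ k ∈ Finset.range K, (if k < K then (N k : ℝ≥0∞) else 0) :=
    tsum_eq_sum fun k hk => if_neg (by simpa [Finset.mem_range] using hk)
  have h6 : ∑' k : ℕ, (if k < K then (N k : ℝ≥0∞) else 0) < ⊤ := by
    rw [hpart1]
    refine ENNReal.sum_lt_top.2 fun k _ => ?_
    split
    · exact ENNReal.natCast_lt_top _
    · simp
  have h7 : ∑' k : ℕ, c * r ^ k < ⊤ := by
    rw [ENNReal.tsum_mul_left, ENNReal.tsum_geometric]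
    refine ENNReal.mul_lt_top ENNReal.ofReal_lt_top (ENNReal.inv_lt_top.2 ?_)
    have hr1 : r < 1 := by
      rw [hr]
      exact ENNReal.ofReal_lt_one.2 (Real.exp_lt_one_iff.2 (by linarith))
    exact tsub_pos_of_lt hr1
  exact ENNReal.add_lt_top.2 ⟨h6, h7⟩

/-- for a group acting isometrically on a metric space with subexponential
growth (`v(G,X) = 0`), any sequence of probability measures whose convolutions have
first moments growing at most linearly has asymptotic entropy `limsup H/n = 0`. -/
theorem entropy_rate_zero_of_subexponential_growth {G : Type*} [Group G] [Countable G]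
    {X : Type*} [MetricSpace X] [MulAction G X]
    (hiso : ∀ g : G, Isometry fun x : X => g • x) (o : X)
    (hfin : ∀ t : ℝ, {g : G | dist o (g • o) ≤ t}.Finite)
    (hsubexp : ∀ v > (0 : ℝ), ∀ᶠ t : ℝ in atTop,
      (Nat.card {g : G | dist o (g • o) ≤ t} : ℝ) ≤ Real.exp (v * t))
    (μs : ℕ → PMF G) (C : ℝ)
    (hmom : ∀ n : ℕ,
      pmfMoment (fun g => dist o (g • o)) (convPrefix μs n) ≤ ENNReal.ofReal (C * n)) :
    Filter.limsup (fun n : ℕ => (pmfEntropy (convPrefix μs n)).toReal / n) atTop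
      = 0 := by
  set ℓ : G → ℝ := fun g => dist o (g • o) with hldef
  have hl0 : ∀ g, 0 ≤ ℓ g := fun g => dist_nonneg
  have hS : ∀ l : ℝ, 0 < l → ∑' g : G, ENNReal.ofReal (Real.exp (-(l * ℓ g))) < ⊤ := by
    intro l hl
    exact tsum_exp_neg_lt_top ℓ hl0 hfin hl (hsubexp (l / 2) (by positivity))
  set C' : ℝ := max C 0 with hC'
  have hC'0 : 0 ≤ C' := le_max_right _ _
  set u : ℕ → ℝ := fun n => (pmfEntropy (convPrefix μs n)).toReal / n with hu
  have hkey : ∀ l : ℝ, 0 < l → ∀ n : ℕ, 1 ≤ n →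
      u n ≤ l * C' + (∑' g : G, ENNReal.ofReal (Real.exp (-(l * ℓ g)))).toReal / n := by
    intro l hl n hn
    set S := ∑' g : G, ENNReal.ofReal (Real.exp (-(l * ℓ g))) with hSdef
    have hSne : S ≠ ⊤ := (hS l hl).ne
    have h1 : pmfEntropy (convPrefix μs n)
        ≤ ENNReal.ofReal l * pmfMoment ℓ (convPrefix μs n) + S :=
      entropy_le_lin ℓ (convPrefix μs n) hl
    have h2 : ENNReal.ofReal l * pmfMoment ℓ (convPrefix μs n)
        ≤ ENNReal.ofReal (l * (C' * n)) := by
      calc ENNReal.ofReal l * pmfMoment ℓ (convPrefix μs n)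
          ≤ ENNReal.ofReal l * ENNReal.ofReal (C * n) := by
            exact mul_le_mul_right (hmom n) _
        _ ≤ ENNReal.ofReal l * ENNReal.ofReal (C' * n) := by
            gcongr
            exact le_max_left _ _
        _ = ENNReal.ofReal (l * (C' * n)) := (ENNReal.ofReal_mul hl.le).symm
    have hnum : 0 ≤ l * (C' * n) := by positivity
    have h3 : pmfEntropy (convPrefix μs n) ≤ ENNReal.ofReal (l * (C' * n) + S.toReal) := by
      rw [ENNReal.ofReal_add hnum ENNReal.toReal_nonneg, ENNReal.ofReal_toReal hSne]
      exact h1.trans (add_le_add_left h2 _)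
    have h4 : (pmfEntropy (convPrefix μs n)).toReal ≤ l * (C' * n) + S.toReal :=
      ENNReal.toReal_le_of_le_ofReal (by positivity) h3
    have hn0 : (0:ℝ) < n := by exact_mod_cast hn
    calc u n ≤ (l * (C' * n) + S.toReal) / n := (div_le_div_iff_of_pos_right hn0).2 h4
      _ = l * C' + S.toReal / n := by field_simp
  have hu0 : ∀ n, 0 ≤ u n := fun n => div_nonneg ENNReal.toReal_nonneg (Nat.cast_nonneg n)
  have hbddabove : ∀ᶠ n : ℕ in atTop,
      u n ≤ 1 * C' + (∑' g : G, ENNReal.ofReal (Real.exp (-(1 * ℓ g)))).toReal := by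
    filter_upwards [eventually_ge_atTop 1] with n hn
    refine (hkey 1 one_pos n hn).trans ?_
    have hn1 : (1:ℝ) ≤ (n:ℝ) := by exact_mod_cast hn
    exact add_le_add_right (div_le_self ENNReal.toReal_nonneg hn1) _
  have hcob : IsCoboundedUnder (· ≤ ·) atTop u :=
    isCoboundedUnder_le_of_le atTop hu0
  have hbdd : IsBoundedUnder (· ≤ ·) atTop u := ⟨_, eventually_map.2 hbddabove⟩
  have hge : 0 ≤ limsup u atTop :=
    le_limsup_of_frequently_le (Frequently.of_forall hu0) hbdd
  have hle : ∀ ε : ℝ, 0 < ε → limsup u atTop ≤ ε := by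
    intro ε hε
    have hlpos : 0 < ε / (2 * (C' + 1)) := by positivity
    set l : ℝ := ε / (2 * (C' + 1)) with hldf
    have h1 : l * (C' + 1) = ε / 2 := by
      rw [hldf]
      field_simp
    have hlC : l * C' ≤ ε / 2 := by nlinarith
    have hev1 : ∀ᶠ n : ℕ in atTop,
        (∑' g : G, ENNReal.ofReal (Real.exp (-(l * ℓ g)))).toReal / n ≤ ε / 2 :=
      (tendsto_const_div_atTop_nhds_zero_nat _).eventually_le_const (by positivity)
    refine limsup_le_of_le hcob ?_
    filter_upwards [eventually_ge_atTop 1, hev1] with n hn h2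
    have h3 := hkey l hlpos n hn
    linarith
  have hle0 : limsup u atTop ≤ 0 := by
    by_contra hcon
    push_neg at hcon
    have := hle (limsup u atTop / 2) (by linarith)
    linarith
  exact le_antisymm hle0 hge
end
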